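/- arXiv:1408.3292 — 11 statements merged into one kernel-verified Lean document; each statement's English description precedes it below -/
import Mathlib

section
/- Let $t \ge 2$ and $t < k < n$. Define $\mathcal{F} = \{A \subseteq [n] : |A| \le k, [t] \subseteq A\} \cup \{A \subseteq [t] : |A| = t-1\}$. Then $|\mathcal{F}| = \sum_{j=0}^{k-t} \binom{n-t}{k-t-j} + t$, and every pair $A, B \in \mathcal{F}$ with $|A \cap B| \le t-1$ satisfies $|A \triangle B| \le k - t + 1$. -/
/-!
The family splits into the sets containing `[t]`, which are counted by the sets they add to
`[t]`, and the `t` subsets of `[t]` of size `t - 1`. Two sets of the first kind meet in at least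
`t` elements; a set of the second kind lies inside every set of the first kind, so their
symmetric difference has at most `k - (t - 1)` elements; two sets of the second kind differ in
at most two elements, and `2 ≤ k - t + 1`.
-/

open Finset

namespace Finset

theorem card_powerset_filter_card_le {α : Type*} (u : Finset α) (m : ℕ) :
    #{A ∈ u.powerset | #A ≤ m} = ∑ i ∈ range (m + 1), (#u).choose i := by
  rw [card_eq_sum_card_fiberwise (f := card) (t := range (m + 1))
    (fun A hA ↦ mem_range.2 (Nat.lt_succ_of_le (mem_filter.1 hA).2))]
  refine sum_congr rfl fun i hi ↦ ?_
  rw [← card_powersetCard, powersetCard_eq_filter, filter_filter]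
  congr 1
  exact filter_congr fun A _ ↦ by have := mem_range.1 hi; constructor <;> rintro ⟨_, _⟩ <;> omega

theorem card_powersetCard_card_sub_one {α : Type*} {u : Finset α} (hu : u.Nonempty) :
    #(powersetCard (#u - 1) u) = #u := by
  rw [card_powersetCard, Nat.choose_symm_of_eq_add (Nat.sub_add_cancel hu.card_pos).symm,
    Nat.choose_one_right]

variable {α : Type*} [DecidableEq α]

theorem card_powerset_filter_superset_card_le {s u : Finset α} (hsu : s ⊆ u) {k : ℕ}
    (hsk : #s ≤ k) :
    #{A ∈ u.powerset | #A ≤ k ∧ s ⊆ A} = ∑ i ∈ range (k - #s + 1), (#u - #s).choose i := by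
  rw [← card_sdiff_of_subset hsu, ← card_powerset_filter_card_le]
  refine card_nbij' (· \ s) (· ∪ s) ?_ ?_ ?_ ?_
  · intro A hA
    simp only [coe_filter, mem_powerset, Set.mem_ofPred_eq] at hA ⊢
    exact ⟨sdiff_subset_sdiff hA.1 le_rfl, by rw [card_sdiff_of_subset hA.2.2]; omega⟩
  · intro B hB
    simp only [coe_filter, mem_powerset, Set.mem_ofPred_eq, subset_sdiff] at hB ⊢
    exact ⟨union_subset hB.1.1 hsu, (card_union_le _ _).trans (by omega), subset_union_right⟩
  · intro A hA
    exact sdiff_union_of_subset (mem_filter.1 hA).2.2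
  · intro B hB
    exact union_sdiff_cancel_right (subset_sdiff.1 (mem_powerset.1 (mem_filter.1 hB).1)).2

theorem card_sdiff_union_sdiff_of_subset {A B : Finset α} (h : B ⊆ A) :
    #(A \ B ∪ B \ A) = #A - #B := by
  rw [sdiff_eq_empty_iff_subset.2 h, union_empty, card_sdiff_of_subset h]

theorem card_sdiff_union_sdiff_add_card_inter (A B : Finset α) :
    #(A \ B ∪ B \ A) + #(A ∩ B) = #(A ∪ B) := by
  rw [card_union_of_disjoint disjoint_sdiff_sdiff]
  have := card_sdiff_add_card_inter A B
  have := card_sdiff_add_card_inter B A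
  have := card_union_add_card_inter A B
  rw [inter_comm B] at *
  omega

theorem card_sdiff_union_sdiff_le_two {A B u : Finset α} (hA : A ⊆ u) (hB : B ⊆ u)
    (hAc : #A = #u - 1) (hBc : #B = #u - 1) : #(A \ B ∪ B \ A) ≤ 2 := by
  have := card_le_card (union_subset hA hB)
  have := card_union_add_card_inter A B
  have := card_sdiff_union_sdiff_add_card_inter A B
  omega

end Finset

theorem stmt_3 (n k t : ℕ) (ht : 2 ≤ t) (htk : t < k) (hkn : k < n)
    (F : Finset (Finset ℕ))
    (hF : F = (Finset.range n).powerset.filter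
            (fun A => A.card ≤ k ∧ Finset.range t ⊆ A) ∪
          (Finset.range t).powerset.filter (fun A => A.card = t - 1)) :
    F.card = (∑ j ∈ Finset.range (k - t + 1), (n - t).choose (k - t - j)) + t ∧
    ∀ A ∈ F, ∀ B ∈ F, (A ∩ B).card ≤ t - 1 →
      ((A \ B) ∪ (B \ A)).card ≤ k - t + 1 := by
  subst hF
  refine ⟨?_, fun A hA B hB hAB ↦ ?_⟩
  · have hdisj : Disjoint ((range n).powerset.filter (fun A ↦ #A ≤ k ∧ range t ⊆ A))
        ((range t).powerset.filter (fun A ↦ #A = t - 1)) :=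
      disjoint_left.2 fun A h₁ h₂ ↦ by
        have := card_le_card (mem_filter.1 h₁).2.2
        simp only [mem_filter, card_range] at h₂ this
        omega
    have hcard := card_powersetCard_card_sub_one (u := range t) (nonempty_range_iff.2 (by omega))
    rw [card_range] at hcard
    rw [card_union_of_disjoint hdisj, ← powersetCard_eq_filter, hcard,
      card_powerset_filter_superset_card_le (range_subset_range.2 (by omega))
        (by rw [card_range]; omega),
      card_range, card_range, ← sum_range_reflect, Nat.add_sub_cancel]
  simp only [mem_union, mem_filter, mem_powerset] at hA hB
  rcases hA with ⟨-, hAk, htA⟩ | ⟨hAt, hAc⟩ <;> rcases hB with ⟨-, hBk, htB⟩ | ⟨hBt, hBc⟩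
  · have := card_le_card (subset_inter htA htB)
    rw [card_range] at this
    omega
  · rw [card_sdiff_union_sdiff_of_subset (hBt.trans htA)]
    omega
  · rw [union_comm, card_sdiff_union_sdiff_of_subset (hAt.trans htB)]
    omega
  · have := card_sdiff_union_sdiff_le_two hAt hBt (by rw [hAc, card_range])
      (by rw [hBc, card_range])
    omega
end

section
/- Let $r \ge 2$, $k \ge 1$, and $n$ satisfy $(r-1)n \ge rk$. If $\mathcal{F}$ is a family of $k$-element subsets of $[n]$ such that $F_1 \cap F_2 \cap \cdots \cap F_r \ne \emptyset$ for all $F_1, \dots, F_r \in \mathcal{F}$ (not necessarily distinct), then $|\mathcal{F}| \le \binom{n-1}{k-1}$. -/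
/-!
Frankl's averaging argument. Cut `[n]` into `r` blocks `D i` of size at most `n - k`, one of
them of size exactly `n - k`; this is possible because `r k ≤ (r - 1) n` means `n ≤ r (n - k)`.
For every permutation `σ` the blocks `σ • D i` cover `[n]`, so by the `r`-wise intersection
property at most `r - 1` of them are disjoint from a member of `F`. On the other hand, if
`|F| > C(n - 1, k - 1)`, Kruskal–Katona (Lovász form) applied to the complements of the members
of `F` shows that for `t ≤ n - k` at least `C(n - 1, t)` of the `t`-sets, a fraction `(n - t) / n`,
are disjoint from a member of `F`, and strictly more for `t = n - k`. Averaging over `σ`, the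
expected number of blocks `σ • D i` disjoint from a member of `F` then exceeds
`∑ i, (n - |D i|) / n = r - 1`.
-/

open Finset Equiv
open scoped Nat Pointwise FinsetFamily

theorem Nat.mul_choose_pred_eq (n s : ℕ) : n * (n - 1).choose s = (n - s) * n.choose s := by
  rcases n with _ | n
  · simp
  · simpa [mul_comm] using Nat.choose_mul_succ_eq n s

section Averaging

variable {α : Type*} [Fintype α] [DecidableEq α]

theorem card_perm_smul_eq_of_card_eq {D S : Finset α} (h : #S = #D) :
    #{σ : Perm α | σ • D = S} = #{σ : Perm α | σ • D = D} := by
  obtain ⟨τ, hτ⟩ := (Set.powersetCard.isPretransitive (α := α) (n := #D)).exists_smul_eq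
    (Set.powersetCard.ofCard rfl) (Set.powersetCard.ofCard h)
  replace hτ : τ • D = S := congrArg Subtype.val hτ
  refine card_nbij' (τ⁻¹ * ·) (τ * ·) ?_ ?_ ?_ ?_ <;> intro σ hσ <;>
    simp_all [mul_smul, inv_smul_eq_iff]

theorem card_filter_perm_smul (D : Finset α) (p : Finset α → Prop) [DecidablePred p] :
    #{σ : Perm α | p (σ • D)} =
      #{S ∈ powersetCard #D univ | p S} * #{σ : Perm α | σ • D = D} := by
  rw [card_eq_sum_card_fiberwise (f := (· • D)) (t := {S ∈ powersetCard #D univ | p S}),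
    ← smul_eq_mul, ← sum_const]
  · refine sum_congr rfl fun S hS => ?_
    rw [mem_filter, mem_powersetCard_univ] at hS
    rw [← card_perm_smul_eq_of_card_eq hS.1, filter_filter]
    congr 1
    exact filter_congr fun σ _ => ⟨And.right, fun h => ⟨h ▸ hS.2, h⟩⟩
  · intro σ hσ
    simpa [card_smul_finset] using hσ

theorem choose_mul_card_perm_smul_eq_self (D : Finset α) :
    (Fintype.card α).choose #D * #{σ : Perm α | σ • D = D} = (Fintype.card α)! := by
  simpa [card_powersetCard, Fintype.card_perm] using
    (card_filter_perm_smul D fun _ => True).symm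

theorem sub_card_mul_factorial_eq (D : Finset α) :
    (Fintype.card α - #D) * (Fintype.card α)! =
      Fintype.card α * (Fintype.card α - 1).choose #D * #{σ : Perm α | σ • D = D} := by
  rw [← choose_mul_card_perm_smul_eq_self D, Nat.mul_choose_pred_eq, mul_assoc]

-- If a fraction `(n - |D|) / n` of the `|D|`-sets satisfies `p`, so does the same fraction of
-- the images `σ • D`; stated with denominators cleared.
theorem sub_card_mul_factorial_le_of_choose_le (D : Finset α) (p : Finset α → Prop)
    [DecidablePred p] (h : (Fintype.card α - 1).choose #D ≤ #{S ∈ powersetCard #D univ | p S}) :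
    (Fintype.card α - #D) * (Fintype.card α)! ≤
      Fintype.card α * #{σ : Perm α | p (σ • D)} := by
  rw [sub_card_mul_factorial_eq, card_filter_perm_smul, ← mul_assoc]
  gcongr

theorem sub_card_mul_factorial_lt_of_choose_lt [Nonempty α] (D : Finset α)
    (p : Finset α → Prop) [DecidablePred p]
    (h : (Fintype.card α - 1).choose #D < #{S ∈ powersetCard #D univ | p S}) :
    (Fintype.card α - #D) * (Fintype.card α)! <
      Fintype.card α * #{σ : Perm α | p (σ • D)} := by
  have hstab : 0 < #{σ : Perm α | σ • D = D} := card_pos.2 ⟨1, by simp⟩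
  rw [sub_card_mul_factorial_eq, card_filter_perm_smul, ← mul_assoc]
  gcongr

end Averaging

section Intersecting

variable {ι α : Type*} [Fintype ι] [Fintype α] [DecidableEq α] {F : Finset (Finset α)}

theorem exists_forall_not_disjoint_of_cover
    (hint : ∀ f : ι → Finset α, (∀ i, f i ∈ F) → (univ.inf f).Nonempty)
    {E : ι → Finset α} (hE : ∀ x, ∃ i, x ∈ E i) : ∃ i, ∀ A ∈ F, ¬Disjoint A (E i) := by
  by_contra! h
  choose A hA hdisj using h
  obtain ⟨x, hx⟩ := hint A hA
  obtain ⟨i, hi⟩ := hE x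
  exact disjoint_left.1 (hdisj i) (inf_le (f := A) (mem_univ i) hx) hi

theorem card_filter_disjoint_lt_of_cover
    (hint : ∀ f : ι → Finset α, (∀ i, f i ∈ F) → (univ.inf f).Nonempty)
    {E : ι → Finset α} (hE : ∀ x, ∃ i, x ∈ E i) :
    #{i | ∃ A ∈ F, Disjoint A (E i)} < Fintype.card ι := by
  obtain ⟨i, hi⟩ := exists_forall_not_disjoint_of_cover hint hE
  exact card_lt_univ_of_notMem (x := i) (by simpa using hi)

end Intersecting

section Shadow

variable {α : Type*} [Fintype α] [DecidableEq α] {F : Finset (Finset α)} {k : ℕ}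

theorem shadow_iterate_image_compl_subset (hF : ∀ A ∈ F, #A = k) (i : ℕ) :
    ∂^[i] (F.image compl) ⊆
      {S ∈ powersetCard (Fintype.card α - k - i) (univ : Finset α) | ∃ A ∈ F, Disjoint A S} := by
  intro T hT
  obtain ⟨_, hS, hTS, hcard⟩ := mem_shadow_iterate_iff_exists_mem_card_add.1 hT
  obtain ⟨A, hA, rfl⟩ := mem_image.1 hS
  rw [card_compl, hF A hA] at hcard
  refine mem_filter.2 ⟨mem_powersetCard_univ.2 (by omega), A, hA, ?_⟩
  exact disjoint_left.2 fun x hxA hxT => mem_compl.1 (hTS hxT) hxA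

theorem card_le_card_filter_disjoint (hF : ∀ A ∈ F, #A = k) :
    #F ≤ #{S ∈ powersetCard (Fintype.card α - k) univ | ∃ A ∈ F, Disjoint A S} := by
  simpa [card_image_of_injective F compl_injective] using
    card_le_card (shadow_iterate_image_compl_subset hF 0)

end Shadow

theorem sum_sub_card_fiber {ι α : Type*} [Fintype ι] [DecidableEq ι] [Fintype α]
    (c : α → ι) :
    ∑ i, (Fintype.card α - #{x | c x = i}) = (Fintype.card ι - 1) * Fintype.card α := by
  have hsum : ∑ i, #{x | c x = i} = Fintype.card α :=
    (card_eq_sum_card_fiberwise fun x _ => mem_univ (c x)).symm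
  have hadd : ∑ i, (Fintype.card α - #{x | c x = i}) + ∑ i, #{x | c x = i} =
      Fintype.card ι * Fintype.card α := by
    rw [← sum_add_distrib, sum_congr rfl fun i _ => Nat.sub_add_cancel (card_le_univ _),
      sum_const, Finset.card_univ, smul_eq_mul]
  rw [Nat.sub_one_mul]
  omega

section Frankl

variable {n k : ℕ} {F : Finset (Finset (Fin n))}

theorem choose_le_card_filter_disjoint {t : ℕ} (hF : ∀ A ∈ F, #A = k) (hk : 1 ≤ k)
    (hkn : k ≤ n) (hlarge : (n - 1).choose (k - 1) ≤ #F) (ht : t ≤ n - k) :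
    (n - 1).choose t ≤ #{S ∈ powersetCard t univ | ∃ A ∈ F, Disjoint A S} := by
  have hsized : (F.image compl : Set (Finset (Fin n))).Sized (n - k) := by
    intro S hS
    obtain ⟨A, hA, rfl⟩ := mem_image.1 hS
    simp [card_compl, hF A hA]
  have hcompl : (n - 1).choose (n - k) ≤ #(F.image compl) := by
    rwa [card_image_of_injective F compl_injective, ← Nat.choose_symm (by omega),
      show n - 1 - (n - k) = k - 1 by omega]
  have hKK := kruskal_katona_lovasz_form (i := n - k - t) (by omega) (by omega) (by omega)
    hsized hcompl
  rw [show n - k - (n - k - t) = t by omega] at hKK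
  refine hKK.trans (card_le_card ?_)
  simpa [show n - k - (n - k - t) = t by omega] using
    shadow_iterate_image_compl_subset hF (n - k - t)

theorem sub_card_mul_factorial_le_card_perm_disjoint (hF : ∀ A ∈ F, #A = k) (hk : 1 ≤ k)
    (hkn : k ≤ n) (hlarge : (n - 1).choose (k - 1) ≤ #F) {D : Finset (Fin n)}
    (hD : #D ≤ n - k) :
    (n - #D) * n ! ≤ n * #{σ : Perm (Fin n) | ∃ A ∈ F, Disjoint A (σ • D)} := by
  simpa using sub_card_mul_factorial_le_of_choose_le D (fun S => ∃ A ∈ F, Disjoint A S)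
    (by simpa using choose_le_card_filter_disjoint hF hk hkn hlarge hD)

theorem sub_card_mul_factorial_lt_card_perm_disjoint (hF : ∀ A ∈ F, #A = k) (hk : 1 ≤ k)
    (hkn : k < n) (hlarge : (n - 1).choose (k - 1) < #F) {D : Finset (Fin n)}
    (hD : #D = n - k) :
    (n - #D) * n ! < n * #{σ : Perm (Fin n) | ∃ A ∈ F, Disjoint A (σ • D)} := by
  have : NeZero n := ⟨by omega⟩
  have hlevel :
      (n - 1).choose (n - k) < #{S ∈ powersetCard (n - k) univ | ∃ A ∈ F, Disjoint A S} := by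
    refine lt_of_lt_of_le ?_ (by simpa using card_le_card_filter_disjoint hF)
    rwa [← Nat.choose_symm (by omega), show n - 1 - (n - k) = k - 1 by omega]
  simpa using sub_card_mul_factorial_lt_of_choose_lt D (fun S => ∃ A ∈ F, Disjoint A S)
    (by simpa [hD] using hlevel)

theorem card_le_choose_of_fibers {ι : Type*} [Fintype ι] [DecidableEq ι]
    (hk : 1 ≤ k) (hkn : k < n) (hF : ∀ A ∈ F, #A = k)
    (hint : ∀ f : ι → Finset (Fin n), (∀ i, f i ∈ F) → (univ.inf f).Nonempty)
    (c : Fin n → ι) (hc : ∀ i, #{x | c x = i} ≤ n - k) (i₀ : ι)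
    (hi₀ : #{x | c x = i₀} = n - k) :
    #F ≤ (n - 1).choose (k - 1) := by
  by_contra! hlarge
  set D : ι → Finset (Fin n) := fun i => {x | c x = i}
  set p : Finset (Fin n) → Prop := fun S => ∃ A ∈ F, Disjoint A S
  have hcover (σ : Perm (Fin n)) (x : Fin n) : ∃ i, x ∈ σ • D i :=
    ⟨c (σ⁻¹ • x), by simp [D, ← inv_smul_mem_iff]⟩
  have hfew (σ : Perm (Fin n)) : #{i | p (σ • D i)} ≤ Fintype.card ι - 1 :=
    Nat.le_sub_one_of_lt (card_filter_disjoint_lt_of_cover hint (hcover σ))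
  have hcount : ∑ i, #{σ : Perm (Fin n) | p (σ • D i)} =
      ∑ σ : Perm (Fin n), #{i | p (σ • D i)} :=
    sum_card_bipartiteAbove_eq_sum_card_bipartiteBelow _
  have hcontra := calc
    (Fintype.card ι - 1) * n * n ! = ∑ i, (n - #(D i)) * n ! := by
      rw [← sum_mul]
      simpa using congrArg (· * n !) (sum_sub_card_fiber c).symm
    _ < ∑ i, n * #{σ : Perm (Fin n) | p (σ • D i)} :=
      sum_lt_sum
        (fun i _ => sub_card_mul_factorial_le_card_perm_disjoint hF hk hkn.le hlarge.le (hc i))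
        ⟨i₀, mem_univ _, sub_card_mul_factorial_lt_card_perm_disjoint hF hk hkn hlarge hi₀⟩
    _ = n * ∑ σ : Perm (Fin n), #{i | p (σ • D i)} := by rw [← mul_sum, hcount]
    _ ≤ n * ∑ _σ : Perm (Fin n), (Fintype.card ι - 1) := by gcongr with σ; exact hfew σ
    _ = (Fintype.card ι - 1) * n * n ! := by simp [Fintype.card_perm]; ring
  exact lt_irrefl _ hcontra

end Frankl

theorem card_filter_div_eq_le {n m : ℕ} (hm : 0 < m) (j : ℕ) :
    #{x : Fin n | (x : ℕ) / m = j} ≤ m := by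
  refine (card_le_card_of_injOn (s := {x : Fin n | (x : ℕ) / m = j}) (t := range m)
    (fun x => (x : ℕ) % m) ?_ ?_).trans (card_range m).le
  · intro x _
    simpa using Nat.mod_lt _ hm
  · intro x hx y hy hxy
    simp only [coe_filter, mem_univ, true_and, Set.mem_ofPred_eq] at hx hy
    rw [Fin.ext_iff, ← Nat.div_add_mod x m, ← Nat.div_add_mod y m, hx, hy]
    exact congrArg _ hxy

theorem card_filter_div_eq_zero {n m : ℕ} (hm : 0 < m) (hmn : m ≤ n) :
    #{x : Fin n | (x : ℕ) / m = 0} = m := by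
  simpa [Nat.div_eq_zero_iff, hm.ne', hmn] using Fin.card_filter_val_lt (n := n) (m := m)

theorem stmt_4 (n k r : ℕ) (hr : 2 ≤ r) (hk : 1 ≤ k)
    (hn : r * k ≤ (r - 1) * n)
    (F : Finset (Finset (Fin n)))
    (huniform : ∀ A ∈ F, A.card = k)
    (hint : ∀ f : Fin r → Finset (Fin n), (∀ i, f i ∈ F) →
      (Finset.univ.inf f).Nonempty) :
    F.card ≤ (n - 1).choose (k - 1) := by
  obtain ⟨s, rfl⟩ : ∃ s, r = s + 1 := ⟨r - 1, by omega⟩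
  rw [Nat.add_sub_cancel] at hn
  have hkn : k < n := by nlinarith
  have hm : 0 < n - k := by omega
  have hblocks : n ≤ (n - k) * (s + 1) := by
    zify [hkn.le] at hn ⊢
    nlinarith
  refine card_le_choose_of_fibers hk hkn huniform hint
    (fun x => ⟨x / (n - k), Nat.div_lt_of_lt_mul (x.2.trans_le hblocks)⟩) (fun i => ?_) 0 ?_
  · simpa [Fin.ext_iff] using card_filter_div_eq_le hm i
  · simpa [Fin.ext_iff] using card_filter_div_eq_zero hm (Nat.sub_le n k)
end

section
/- Let $\{(A_i, B_i) : i \in I\}$ be a finite collection of pairs of finite sets such that $A_i \cap B_j = \emptyset$ if and only if $i = j$. Then $\sum_{i \in I} \binom{|A_i| + |B_i|}{|A_i|}^{-1} \le 1$. -/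
/-!
Induction on a ground set `X` containing all the `A i` and `B i`. If some `B i` is empty, the
cross condition forces `I = {i}`. Otherwise, for every `x ∈ X` the pairs `(A i, B i \ {x})` with
`x ∉ A i` again form such a system on `X \ {x}`, so their weights sum to at most `1`. Summing over
`x` and using `b / C(a + b - 1, a) = (a + b) / C(a + b, a)`, each pair contributes exactly
`|X| / C(a + b, a)`, so `|X|` times the original sum is at most `|X|`.
-/

open Finset

section

variable {ι α : Type*} [DecidableEq α]

def IsBollobasSystem (I : Finset ι) (A B : ι → Finset α) : Prop :=
  ∀ i ∈ I, ∀ j ∈ I, A i ∩ B j = ∅ ↔ i = j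

namespace IsBollobasSystem

variable {I : Finset ι} {A B : ι → Finset α}

theorem eq_singleton_of_eq_empty (h : IsBollobasSystem I A B) {i : ι} (hi : i ∈ I)
    (hB : B i = ∅) : I = {i} :=
  eq_singleton_iff_unique_mem.2 ⟨hi, fun j hj => (h j hj i hi).1 (by rw [hB, inter_empty])⟩

theorem filter_notMem_erase (h : IsBollobasSystem I A B) (x : α) :
    IsBollobasSystem {i ∈ I | x ∉ A i} A fun i => (B i).erase x := by
  intro i hi j hj
  rw [mem_filter] at hi hj
  rw [inter_erase, erase_eq_of_notMem fun hx => hi.2 (mem_inter.1 hx).1]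
  exact h i hi.1 j hj.1

end IsBollobasSystem

theorem add_one_mul_inv_choose_eq (a c : ℕ) :
    ((c : ℝ) + 1) * (((a + c).choose a : ℕ) : ℝ)⁻¹ =
      ((a : ℝ) + c + 1) * (((a + c + 1).choose a : ℕ) : ℝ)⁻¹ := by
  have key : (c + 1) * (a + c + 1).choose a = (a + c).choose a * (a + c + 1) := by
    rw [Nat.choose_mul_succ_eq, show a + c + 1 - a = c + 1 by omega, mul_comm]
  have h₁ : (((a + c).choose a : ℕ) : ℝ) ≠ 0 := by
    exact_mod_cast (Nat.choose_pos (Nat.le_add_right a c)).ne'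
  have h₂ : (((a + c + 1).choose a : ℕ) : ℝ) ≠ 0 := by
    exact_mod_cast (Nat.choose_pos (by omega)).ne'
  field_simp
  exact_mod_cast key

theorem sum_sdiff_inv_choose_card_erase {X A B : Finset α} (hA : A ⊆ X) (hB : B ⊆ X)
    (hAB : Disjoint A B) (hBne : B.Nonempty) :
    ∑ x ∈ X \ A, (((#A + #(B.erase x)).choose #A : ℕ) : ℝ)⁻¹ =
      #X * (((#A + #B).choose #A : ℕ) : ℝ)⁻¹ := by
  obtain ⟨c, hc⟩ : ∃ c, #B = c + 1 := ⟨#B - 1, by have := hBne.card_pos; omega⟩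
  have hfilter : {x ∈ X \ A | x ∈ B} = B := by
    ext x
    simp only [mem_filter, mem_sdiff]
    exact ⟨fun hx => hx.2, fun hx => ⟨⟨hB hx, disjoint_right.1 hAB hx⟩, hx⟩⟩
  have h_in : ∑ x ∈ X \ A with x ∈ B, (((#A + #(B.erase x)).choose #A : ℕ) : ℝ)⁻¹ =
      (c + 1) * (((#A + c).choose #A : ℕ) : ℝ)⁻¹ := by
    rw [sum_congr rfl fun x hx => by rw [card_erase_of_mem (mem_filter.1 hx).2, hc,
      Nat.add_sub_cancel], sum_const, hfilter, hc, nsmul_eq_mul, Nat.cast_succ]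
  have h_out : ∑ x ∈ X \ A with x ∉ B, (((#A + #(B.erase x)).choose #A : ℕ) : ℝ)⁻¹ =
      #{x ∈ X \ A | x ∉ B} * (((#A + #B).choose #A : ℕ) : ℝ)⁻¹ := by
    rw [sum_congr rfl fun x hx => by rw [erase_eq_of_notMem (mem_filter.1 hx).2], sum_const,
      nsmul_eq_mul]
  rw [← sum_filter_add_sum_filter_not (X \ A) (· ∈ B), h_in, h_out,
    ← card_sdiff_add_card_eq_card hA, ← card_filter_add_card_filter_not (s := X \ A) (· ∈ B),
    hfilter, hc]
  push_cast
  linear_combination add_one_mul_inv_choose_eq (#A) c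

theorem IsBollobasSystem.sum_inv_choose_le_one {I : Finset ι} {A B : ι → Finset α} (X : Finset α)
    (hA : ∀ i ∈ I, A i ⊆ X) (hB : ∀ i ∈ I, B i ⊆ X) (h : IsBollobasSystem I A B) :
    ∑ i ∈ I, (((#(A i) + #(B i)).choose #(A i) : ℕ) : ℝ)⁻¹ ≤ 1 := by
  induction X using Finset.strongInduction generalizing I B with
  | H X ih =>
  by_cases hdeg : ∃ i ∈ I, B i = ∅
  · obtain ⟨i, hi, hBi⟩ := hdeg
    simp [h.eq_singleton_of_eq_empty hi hBi, hBi]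
  push Not at hdeg
  rcases I.eq_empty_or_nonempty with rfl | ⟨i₀, hi₀⟩
  · simp
  have hX : (0 : ℝ) < #X :=
    Nat.cast_pos.2 (card_pos.2 ((hdeg i₀ hi₀).mono (hB i₀ hi₀)))
  have h_erase : ∀ x ∈ X, ∑ i ∈ I with x ∉ A i,
      (((#(A i) + #((B i).erase x)).choose #(A i) : ℕ) : ℝ)⁻¹ ≤ 1 := fun x hx =>
    ih (X.erase x) (erase_ssubset hx)
      (fun i hi => subset_erase.2 ⟨hA i (mem_filter.1 hi).1, (mem_filter.1 hi).2⟩)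
      (fun i hi => erase_subset_erase x (hB i (mem_filter.1 hi).1)) (h.filter_notMem_erase x)
  refine le_of_mul_le_mul_left ?_ hX
  calc (#X : ℝ) * ∑ i ∈ I, (((#(A i) + #(B i)).choose #(A i) : ℕ) : ℝ)⁻¹
      = ∑ i ∈ I, ∑ x ∈ X \ A i, (((#(A i) + #((B i).erase x)).choose #(A i) : ℕ) : ℝ)⁻¹ := by
        rw [mul_sum]
        exact sum_congr rfl fun i hi => (sum_sdiff_inv_choose_card_erase (hA i hi) (hB i hi)
          (disjoint_iff_inter_eq_empty.2 ((h i hi i hi).2 rfl)) (hdeg i hi)).symm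
    _ = ∑ x ∈ X, ∑ i ∈ I with x ∉ A i,
          (((#(A i) + #((B i).erase x)).choose #(A i) : ℕ) : ℝ)⁻¹ :=
        sum_comm' fun i x => by simp only [mem_sdiff, mem_filter]; tauto
    _ ≤ ∑ x ∈ X, 1 := sum_le_sum h_erase
    _ = #X * 1 := by simp

end

theorem stmt_6 {ι α : Type*} [DecidableEq α] (I : Finset ι)
    (A B : ι → Finset α)
    (h : ∀ i ∈ I, ∀ j ∈ I, A i ∩ B j = ∅ ↔ i = j) :
    ∑ i ∈ I, (((((A i).card + (B i).card).choose (A i).card : ℕ) : ℝ))⁻¹ ≤ 1 :=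
  IsBollobasSystem.sum_inv_choose_le_one (I.biUnion fun i => A i ∪ B i)
    (fun _ hi => subset_union_left.trans (subset_biUnion_of_mem (fun i => A i ∪ B i) hi))
    (fun _ hi => subset_union_right.trans (subset_biUnion_of_mem (fun i => A i ∪ B i) hi)) h
end

section
/- Let $t \ge 0$ and let $\{(A_i, B_i) : i \in I\}$ be a finite collection of pairs of finite sets such that: (a) $|A_i \cap B_i| \le t$ for each $i$; (b) $|A_i \cap B_j| \ge t$ for all $i \ne j$; (c) if $A_i \cap B_i = A_j \cap B_j$ for $i \ne j$, then $A_i \cap B_j \ne A_i \cap B_i$ and $A_j \cap B_i \ne A_i \cap B_i$. Then $\sum_{i \in I} \binom{|A_i \cup B_i|}{|A_i \setminus B_i|}^{-1} \binom{|B_i|}{|A_i \cap B_i|}^{-1} \le 1$. -/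
set_option linter.unusedSectionVars false
set_option linter.unusedVariables false
set_option maxHeartbeats 1000000

open Finset

lemma exists_perm_image₃ {β : Type*} [Fintype β] [DecidableEq β]
    (Q1 Q2 Q3 R1 R2 R3 : Finset β)
    (hq12 : Disjoint Q1 Q2) (hq13 : Disjoint Q1 Q3) (hq23 : Disjoint Q2 Q3)
    (hU : Q1 ∪ Q2 ∪ Q3 = R1 ∪ R2 ∪ R3)
    (hc1 : Q1.card = R1.card) (hc2 : Q2.card = R2.card) (hc3 : Q3.card = R3.card) :
    ∃ ρ : Equiv.Perm β, Q1.image ρ = R1 ∧ Q2.image ρ = R2 ∧ Q3.image ρ = R3 := by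
  classical
  have hcards : R1.card + R2.card + R3.card = (R1 ∪ R2 ∪ R3).card := by
    rw [← hU, ← hc1, ← hc2, ← hc3,
      card_union_of_disjoint (by exact Finset.disjoint_union_left.2 ⟨hq13, hq23⟩),
      card_union_of_disjoint hq12]
  have h1 := card_union_add_card_inter (R1 ∪ R2) R3
  have h2 := card_union_add_card_inter R1 R2
  have h3 : (R1 ∪ R2).card ≤ R1.card + R2.card := card_union_le _ _
  have hr12 : Disjoint R1 R2 := by
    rw [Finset.disjoint_iff_inter_eq_empty, ← Finset.card_eq_zero]; omega
  have hr3 : Disjoint (R1 ∪ R2) R3 := by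
    rw [Finset.disjoint_iff_inter_eq_empty, ← Finset.card_eq_zero]; omega
  have hr13 : Disjoint R1 R3 := (Finset.disjoint_union_left.1 hr3).1
  have hr23 : Disjoint R2 R3 := (Finset.disjoint_union_left.1 hr3).2
  set e1 : (Q1 : Finset β) ≃ R1 := Finset.equivOfCardEq hc1
  set e2 : (Q2 : Finset β) ≃ R2 := Finset.equivOfCardEq hc2
  set e3 : (Q3 : Finset β) ≃ R3 := Finset.equivOfCardEq hc3
  set f : β → β := fun x =>
    if h : x ∈ Q1 then (e1 ⟨x, h⟩ : β)
    else if h : x ∈ Q2 then (e2 ⟨x, h⟩ : β)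
    else if h : x ∈ Q3 then (e3 ⟨x, h⟩ : β)
    else x with hf
  have m1 : ∀ x (h : x ∈ Q1), f x = (e1 ⟨x, h⟩ : β) := fun x h => by simp [hf, h]
  have m2 : ∀ x (h : x ∈ Q2), f x = (e2 ⟨x, h⟩ : β) := fun x h => by
    have : x ∉ Q1 := fun hx => (Finset.disjoint_left.1 hq12) hx h
    simp [hf, h, this]
  have m3 : ∀ x (h : x ∈ Q3), f x = (e3 ⟨x, h⟩ : β) := fun x h => by
    have h1 : x ∉ Q1 := fun hx => (Finset.disjoint_left.1 hq13) hx h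
    have h2 : x ∉ Q2 := fun hx => (Finset.disjoint_left.1 hq23) hx h
    simp [hf, h, h1, h2]
  have m0 : ∀ x, x ∉ Q1 → x ∉ Q2 → x ∉ Q3 → f x = x := fun x h1 h2 h3 => by
    simp [hf, h1, h2, h3]
  have notmem : ∀ x, x ∉ Q1 → x ∉ Q2 → x ∉ Q3 → (x ∉ R1 ∧ x ∉ R2 ∧ x ∉ R3) := by
    intro x h1 h2 h3
    have : x ∉ R1 ∪ R2 ∪ R3 := by rw [← hU]; simp [h1, h2, h3]
    simp only [Finset.mem_union, not_or] at this
    exact ⟨this.1.1, this.1.2, this.2⟩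
  have k1 : ∀ x, f x ∈ R1 ↔ x ∈ Q1 := by
    intro x
    refine ⟨fun h => ?_, fun h => (m1 x h) ▸ (e1 ⟨x, h⟩).2⟩
    by_contra h1
    by_cases h2 : x ∈ Q2
    · exact Finset.disjoint_left.1 hr12 h ((m2 x h2) ▸ (e2 ⟨x, h2⟩).2)
    by_cases h3 : x ∈ Q3
    · exact Finset.disjoint_left.1 hr13 h ((m3 x h3) ▸ (e3 ⟨x, h3⟩).2)
    · exact (notmem x h1 h2 h3).1 ((m0 x h1 h2 h3) ▸ h)
  have k2 : ∀ x, f x ∈ R2 ↔ x ∈ Q2 := by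
    intro x
    refine ⟨fun h => ?_, fun h => (m2 x h) ▸ (e2 ⟨x, h⟩).2⟩
    by_contra h2
    by_cases h1 : x ∈ Q1
    · exact Finset.disjoint_left.1 hr12 ((m1 x h1) ▸ (e1 ⟨x, h1⟩).2) h
    by_cases h3 : x ∈ Q3
    · exact Finset.disjoint_left.1 hr23 h ((m3 x h3) ▸ (e3 ⟨x, h3⟩).2)
    · exact (notmem x h1 h2 h3).2.1 ((m0 x h1 h2 h3) ▸ h)
  have k3 : ∀ x, f x ∈ R3 ↔ x ∈ Q3 := by
    intro x
    refine ⟨fun h => ?_, fun h => (m3 x h) ▸ (e3 ⟨x, h⟩).2⟩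
    by_contra h3
    by_cases h1 : x ∈ Q1
    · exact Finset.disjoint_left.1 hr13 ((m1 x h1) ▸ (e1 ⟨x, h1⟩).2) h
    by_cases h2 : x ∈ Q2
    · exact Finset.disjoint_left.1 hr23 ((m2 x h2) ▸ (e2 ⟨x, h2⟩).2) h
    · exact (notmem x h1 h2 h3).2.2 ((m0 x h1 h2 h3) ▸ h)
  have hinj : Function.Injective f := by
    intro x y hxy
    by_cases hx1 : x ∈ Q1
    · have hy1 : y ∈ Q1 := (k1 y).1 (hxy ▸ (k1 x).2 hx1)
      have := (m1 x hx1) ▸ (m1 y hy1) ▸ hxy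
      exact congrArg Subtype.val (e1.injective (Subtype.ext this))
    by_cases hx2 : x ∈ Q2
    · have hy2 : y ∈ Q2 := (k2 y).1 (hxy ▸ (k2 x).2 hx2)
      have := (m2 x hx2) ▸ (m2 y hy2) ▸ hxy
      exact congrArg Subtype.val (e2.injective (Subtype.ext this))
    by_cases hx3 : x ∈ Q3
    · have hy3 : y ∈ Q3 := (k3 y).1 (hxy ▸ (k3 x).2 hx3)
      have := (m3 x hx3) ▸ (m3 y hy3) ▸ hxy
      exact congrArg Subtype.val (e3.injective (Subtype.ext this))
    · have hy1 : y ∉ Q1 := fun h => hx1 ((k1 x).1 (hxy ▸ (k1 y).2 h))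
      have hy2 : y ∉ Q2 := fun h => hx2 ((k2 x).1 (hxy ▸ (k2 y).2 h))
      have hy3 : y ∉ Q3 := fun h => hx3 ((k3 x).1 (hxy ▸ (k3 y).2 h))
      rw [m0 x hx1 hx2 hx3, m0 y hy1 hy2 hy3] at hxy
      exact hxy
  refine ⟨Equiv.ofBijective f (Finite.injective_iff_bijective.1 hinj), ?_, ?_, ?_⟩
  all_goals {
    rw [show ⇑(Equiv.ofBijective f (Finite.injective_iff_bijective.1 hinj)) = f from rfl]
    apply Finset.eq_of_subset_of_card_le
    · intro y hy
      simp only [Finset.mem_image] at hy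
      obtain ⟨x, hx, rfl⟩ := hy
      first
      | exact (k1 x).2 hx
      | exact (k2 x).2 hx
      | exact (k3 x).2 hx
    · rw [Finset.card_image_of_injective _ hinj]
      omega
  }
section defs
variable {α : Type*} [DecidableEq α]

def imgf (X : Finset α) (s : Finset α) (hs : s ⊆ X) (σ : {x // x ∈ X} ≃ Fin X.card) :
    Finset (Fin X.card) :=
  s.attach.image (fun x => σ ⟨x.1, hs x.2⟩)

lemma mem_imgf {X s : Finset α} {hs : s ⊆ X} {σ : {x // x ∈ X} ≃ Fin X.card} {y : Fin X.card} :
    y ∈ imgf X s hs σ ↔ ∃ (x : α) (h : x ∈ s), σ ⟨x, hs h⟩ = y := by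
  simp [imgf]

lemma mem_imgf_of_mem {X s : Finset α} {hs : s ⊆ X} {σ : {x // x ∈ X} ≃ Fin X.card}
    {x : {x // x ∈ X}} (h : ↑x ∈ s) : σ x ∈ imgf X s hs σ :=
  mem_imgf.2 ⟨x.1, h, rfl⟩

lemma imgf_mem_elim {X s : Finset α} {hs : s ⊆ X} {σ : {x // x ∈ X} ≃ Fin X.card}
    {y : Fin X.card} (h : y ∈ imgf X s hs σ) : (↑(σ.symm y) : α) ∈ s := by
  obtain ⟨x, hx, hxy⟩ := mem_imgf.1 h
  rw [← hxy, Equiv.symm_apply_apply]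
  exact hx

lemma card_imgf (X s : Finset α) (hs : s ⊆ X) (σ : {x // x ∈ X} ≃ Fin X.card) :
    (imgf X s hs σ).card = s.card := by
  rw [imgf, Finset.card_image_of_injective _ (fun x y hxy => by
    have := congrArg Subtype.val (σ.injective hxy)
    exact Subtype.ext this), Finset.card_attach]

lemma imgf_trans (X s : Finset α) (hs : s ⊆ X) (σ : {x // x ∈ X} ≃ Fin X.card)
    (ρ : Equiv.Perm (Fin X.card)) :
    imgf X s hs (σ.trans ρ) = (imgf X s hs σ).image ρ := by
  rw [imgf, imgf, Finset.image_image]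
  rfl

lemma imgf_disjoint (X s t : Finset α) (hs : s ⊆ X) (ht : t ⊆ X)
    (σ : {x // x ∈ X} ≃ Fin X.card) (hst : Disjoint s t) :
    Disjoint (imgf X s hs σ) (imgf X t ht σ) := by
  rw [Finset.disjoint_left]
  intro y hy hy'
  exact Finset.disjoint_left.1 hst (imgf_mem_elim hy) (imgf_mem_elim hy')

lemma imgf_subset (X s t : Finset α) (hs : s ⊆ X) (ht : t ⊆ X)
    (σ : {x // x ∈ X} ≃ Fin X.card) (hst : s ⊆ t) :
    imgf X s hs σ ⊆ imgf X t ht σ := by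
  intro y hy
  obtain ⟨x, hx, hxy⟩ := mem_imgf.1 hy
  exact mem_imgf.2 ⟨x, hst hx, hxy⟩

lemma imgf_union (X s t u : Finset α) (hs : s ⊆ X) (ht : t ⊆ X) (hu : u ⊆ X)
    (σ : {x // x ∈ X} ≃ Fin X.card) (hst : s ∪ t = u) :
    imgf X s hs σ ∪ imgf X t ht σ = imgf X u hu σ := by
  ext y
  simp only [Finset.mem_union, mem_imgf]
  constructor
  · rintro (⟨x, hx, hxy⟩ | ⟨x, hx, hxy⟩)
    · exact ⟨x, hst ▸ Finset.mem_union_left _ hx, hxy⟩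
    · exact ⟨x, hst ▸ Finset.mem_union_right _ hx, hxy⟩
  · rintro ⟨x, hx, hxy⟩
    rw [← hst] at hx
    rcases Finset.mem_union.1 hx with h | h
    · exact Or.inl ⟨x, h, hxy⟩
    · exact Or.inr ⟨x, h, hxy⟩

end defs

section rset
variable {n m : ℕ}

def Rset (P : Finset (Fin n)) (h : P.card = m) (lo hi : ℕ) : Finset (Fin n) :=
  (Finset.univ.filter (fun k : Fin m => lo ≤ (k : ℕ) ∧ (k : ℕ) < hi)).image (P.orderEmbOfFin h)

lemma mem_Rset {P : Finset (Fin n)} {h : P.card = m} {lo hi : ℕ} {y : Fin n} :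
    y ∈ Rset P h lo hi ↔ ∃ k : Fin m, (lo ≤ (k : ℕ) ∧ (k : ℕ) < hi) ∧ P.orderEmbOfFin h k = y := by
  simp [Rset]

lemma card_Rset {P : Finset (Fin n)} {h : P.card = m} {lo hi : ℕ} (hlo : lo ≤ hi) (hhi : hi ≤ m) :
    (Rset P h lo hi).card = hi - lo := by
  rw [Rset, Finset.card_image_of_injective _ (P.orderEmbOfFin h).injective]
  have : ((Finset.univ.filter (fun k : Fin m => lo ≤ (k : ℕ) ∧ (k : ℕ) < hi)).image Fin.val)
      = Finset.Ico lo hi := by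
    ext k
    simp only [Finset.mem_image, Finset.mem_filter, Finset.mem_univ, true_and, Finset.mem_Ico]
    constructor
    · rintro ⟨j, hj, rfl⟩; exact hj
    · rintro ⟨h1, h2⟩; exact ⟨⟨k, lt_of_lt_of_le h2 hhi⟩, ⟨h1, h2⟩, rfl⟩
  rw [← Nat.card_Ico lo hi, ← this,
    Finset.card_image_of_injective _ Fin.val_injective]

lemma Rset_lt {P : Finset (Fin n)} {h : P.card = m} {lo hi lo' hi' : ℕ} {x y : Fin n}
    (hx : x ∈ Rset P h lo hi) (hy : y ∈ Rset P h lo' hi') (hle : hi ≤ lo') : x < y := by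
  obtain ⟨k, hk, rfl⟩ := mem_Rset.1 hx
  obtain ⟨k', hk', rfl⟩ := mem_Rset.1 hy
  exact (P.orderEmbOfFin h).strictMono (show k < k' by omega)

lemma Rset_disjoint {P : Finset (Fin n)} {h : P.card = m} {lo hi lo' hi' : ℕ}
    (hle : hi ≤ lo') : Disjoint (Rset P h lo hi) (Rset P h lo' hi') := by
  rw [Finset.disjoint_left]
  intro y hy hy'
  exact lt_irrefl y (Rset_lt hy hy' hle)

lemma Rset_subset {P : Finset (Fin n)} {h : P.card = m} {lo hi : ℕ} :
    Rset P h lo hi ⊆ P := by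
  intro y hy
  obtain ⟨k, _, rfl⟩ := mem_Rset.1 hy
  exact Finset.orderEmbOfFin_mem P h k

lemma Rset_union {P : Finset (Fin n)} {h : P.card = m} {a b : ℕ} (hab : a ≤ b) (hbm : b ≤ m) :
    Rset P h 0 a ∪ Rset P h a b ∪ Rset P h b m = P := by
  apply Finset.Subset.antisymm
  · intro y hy
    rcases Finset.mem_union.1 hy with h' | h'
    · rcases Finset.mem_union.1 h' with h'' | h''
      · exact Rset_subset h''
      · exact Rset_subset h''
    · exact Rset_subset h'
  · intro p hp
    have : p ∈ Set.range (P.orderEmbOfFin h) := by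
      rw [Finset.range_orderEmbOfFin]
      exact hp
    obtain ⟨k, rfl⟩ := this
    have hk := k.2
    simp only [Finset.mem_union, mem_Rset]
    by_cases h1 : (k : ℕ) < a
    · exact Or.inl (Or.inl ⟨k, ⟨Nat.zero_le _, h1⟩, rfl⟩)
    by_cases h2 : (k : ℕ) < b
    · exact Or.inl (Or.inr ⟨k, ⟨by omega, h2⟩, rfl⟩)
    · exact Or.inr ⟨k, ⟨by omega, hk⟩, rfl⟩

lemma Rset_congr {n m : ℕ} {P P' : Finset (Fin n)} (hPP : P = P') (h : P.card = m)
    (h' : P'.card = m) (lo hi : ℕ) : Rset P h lo hi = Rset P' h' lo hi := by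
  subst hPP; rfl

noncomputable def rhoOf {n : ℕ} (Q1 Q2 Q3 R1 R2 R3 : Finset (Fin n)) : Equiv.Perm (Fin n) :=
  if h : ∃ ρ : Equiv.Perm (Fin n), Q1.image ⇑ρ = R1 ∧ Q2.image ⇑ρ = R2 ∧ Q3.image ⇑ρ = R3
  then h.choose else 1

lemma rhoOf_spec {n : ℕ} {Q1 Q2 Q3 R1 R2 R3 : Finset (Fin n)}
    (h : ∃ ρ : Equiv.Perm (Fin n), Q1.image ⇑ρ = R1 ∧ Q2.image ⇑ρ = R2 ∧ Q3.image ⇑ρ = R3) :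
    Q1.image ⇑(rhoOf Q1 Q2 Q3 R1 R2 R3) = R1 ∧ Q2.image ⇑(rhoOf Q1 Q2 Q3 R1 R2 R3) = R2 ∧
      Q3.image ⇑(rhoOf Q1 Q2 Q3 R1 R2 R3) = R3 := by
  rw [rhoOf, dif_pos h]
  exact h.choose_spec

end rset

section count
variable {α : Type*} [DecidableEq α]

def Esigma (X A B : Finset α) (σ : {x // x ∈ X} ≃ Fin X.card) : Prop :=
  (∀ x y : {x // x ∈ X}, ↑x ∈ A \ B → ↑y ∈ B → σ x < σ y) ∧
  (∀ x y : {x // x ∈ X}, ↑x ∈ A ∩ B → ↑y ∈ B \ A → σ x < σ y)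

theorem count_lemma (X A B : Finset α) (hAX : A ⊆ X) (hBX : B ⊆ X)
    [DecidablePred (Esigma X A B)] :
    Nat.factorial X.card ≤ (Finset.filter (Esigma X A B) Finset.univ).card *
      ((A ∪ B).card.choose ((A \ B).card) * (B.card).choose ((A ∩ B).card)) := by
  classical
  have hU : A ∪ B ⊆ X := Finset.union_subset hAX hBX
  have hD1 : A \ B ⊆ X := Finset.sdiff_subset.trans hAX
  have hD2 : A ∩ B ⊆ X := Finset.inter_subset_left.trans hAX
  have hD3 : B \ A ⊆ X := Finset.sdiff_subset.trans hBX
  have hD12 : A \ B ∪ A ∩ B ⊆ X := Finset.union_subset hD1 hD2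
  set m := (A ∪ B).card with hm
  set a := (A \ B).card with ha
  set tt := (A ∩ B).card with htt
  set d3 := (B \ A).card with hd3
  have dd12 : Disjoint (A \ B) (A ∩ B) :=
    Finset.sdiff_disjoint.mono_right Finset.inter_subset_right
  have dd13 : Disjoint (A \ B) (B \ A) :=
    Finset.sdiff_disjoint.mono_right Finset.sdiff_subset
  have dd23 : Disjoint (A ∩ B) (B \ A) :=
    Finset.disjoint_sdiff.mono_left Finset.inter_subset_left
  have hDU : (A \ B ∪ A ∩ B) ∪ (B \ A) = A ∪ B := by
    ext x; simp only [Finset.mem_union, Finset.mem_sdiff, Finset.mem_inter]; tauto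
  have hD12U : A \ B ∪ A ∩ B = A := by
    ext x; simp only [Finset.mem_union, Finset.mem_sdiff, Finset.mem_inter]; tauto
  have hBdec : A ∩ B ∪ B \ A = B := by
    ext x; simp only [Finset.mem_union, Finset.mem_sdiff, Finset.mem_inter]; tauto
  have hmsum : m = a + tt + d3 := by
    rw [hm, ← hDU, card_union_of_disjoint (by
        exact Finset.disjoint_union_left.2 ⟨dd13, dd23⟩),
      card_union_of_disjoint dd12]
  have hbsum : B.card = tt + d3 := by
    rw [← hBdec, card_union_of_disjoint dd23]
  -- the sorting permutation for each σ
  have hPcard : ∀ σ : {x // x ∈ X} ≃ Fin X.card, (imgf X (A ∪ B) hU σ).card = m :=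
    fun σ => card_imgf X (A ∪ B) hU σ
  set Q1 : ({x // x ∈ X} ≃ Fin X.card) → Finset (Fin X.card) :=
    fun σ => imgf X (A \ B) hD1 σ with hQ1
  set Q2 : ({x // x ∈ X} ≃ Fin X.card) → Finset (Fin X.card) :=
    fun σ => imgf X (A ∩ B) hD2 σ with hQ2
  set Q3 : ({x // x ∈ X} ≃ Fin X.card) → Finset (Fin X.card) :=
    fun σ => imgf X (B \ A) hD3 σ with hQ3
  set P : ({x // x ∈ X} ≃ Fin X.card) → Finset (Fin X.card) :=
    fun σ => imgf X (A ∪ B) hU σ with hPdef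
  set R1 : ({x // x ∈ X} ≃ Fin X.card) → Finset (Fin X.card) :=
    fun σ => Rset (P σ) (hPcard σ) 0 a with hR1
  set R2 : ({x // x ∈ X} ≃ Fin X.card) → Finset (Fin X.card) :=
    fun σ => Rset (P σ) (hPcard σ) a (a + tt) with hR2
  set R3 : ({x // x ∈ X} ≃ Fin X.card) → Finset (Fin X.card) :=
    fun σ => Rset (P σ) (hPcard σ) (a + tt) m with hR3
  set ρ : ({x // x ∈ X} ≃ Fin X.card) → Equiv.Perm (Fin X.card) :=
    fun σ => rhoOf (Q1 σ) (Q2 σ) (Q3 σ) (R1 σ) (R2 σ) (R3 σ) with hρ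
  have hQunion : ∀ σ, Q1 σ ∪ Q2 σ ∪ Q3 σ = P σ := fun σ => by
    show imgf X (A \ B) hD1 σ ∪ imgf X (A ∩ B) hD2 σ ∪ imgf X (B \ A) hD3 σ
      = imgf X (A ∪ B) hU σ
    rw [imgf_union X (A \ B) (A ∩ B) (A \ B ∪ A ∩ B) hD1 hD2 hD12 σ rfl,
      imgf_union X _ (B \ A) (A ∪ B) hD12 hD3 hU σ hDU]
  have hRunion : ∀ σ, R1 σ ∪ R2 σ ∪ R3 σ = P σ := fun σ => by
    show Rset (P σ) (hPcard σ) 0 a ∪ Rset (P σ) (hPcard σ) a (a + tt)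
      ∪ Rset (P σ) (hPcard σ) (a + tt) m = P σ
    exact Rset_union (by omega) (by omega)
  have hRspec : ∀ σ, (Q1 σ).image ⇑(ρ σ) = R1 σ ∧ (Q2 σ).image ⇑(ρ σ) = R2 σ ∧
      (Q3 σ).image ⇑(ρ σ) = R3 σ := by
    intro σ
    apply rhoOf_spec
    apply exists_perm_image₃ _ _ _ _ _ _
      (imgf_disjoint X _ _ hD1 hD2 σ dd12)
      (imgf_disjoint X _ _ hD1 hD3 σ dd13)
      (imgf_disjoint X _ _ hD2 hD3 σ dd23)
      ((hQunion σ).trans (hRunion σ).symm)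
    · show (imgf X (A \ B) hD1 σ).card = (Rset (P σ) (hPcard σ) 0 a).card
      rw [card_imgf, card_Rset (by omega) (by omega)]
      omega
    · show (imgf X (A ∩ B) hD2 σ).card = (Rset (P σ) (hPcard σ) a (a + tt)).card
      rw [card_imgf, card_Rset (by omega) (by omega)]
      omega
    · show (imgf X (B \ A) hD3 σ).card = (Rset (P σ) (hPcard σ) (a + tt) m).card
      rw [card_imgf, card_Rset (by omega) (by omega)]
      omega
  set Φ : ({x // x ∈ X} ≃ Fin X.card) → ({x // x ∈ X} ≃ Fin X.card) :=
    fun σ => σ.trans (ρ σ) with hΦ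
  have hΦP : ∀ σ, P (Φ σ) = P σ := by
    intro σ
    show imgf X (A ∪ B) hU (σ.trans (ρ σ)) = P σ
    rw [imgf_trans]
    rw [show imgf X (A ∪ B) hU σ = P σ from rfl, ← hQunion σ,
      Finset.image_union, Finset.image_union,
      (hRspec σ).1, (hRspec σ).2.1, (hRspec σ).2.2, hRunion σ, hQunion σ]
  have hΦE : ∀ σ, Esigma X A B (Φ σ) := by
    intro σ
    constructor
    · intro x y hx hy
      have hx1 : (Φ σ) x ∈ R1 σ := by
        rw [← (hRspec σ).1]
        exact Finset.mem_image_of_mem _ (mem_imgf_of_mem hx)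
      have : ↑y ∈ A ∩ B ∪ B \ A := by rw [hBdec]; exact hy
      rcases Finset.mem_union.1 this with h | h
      · have hy2 : (Φ σ) y ∈ R2 σ := by
          rw [← (hRspec σ).2.1]
          exact Finset.mem_image_of_mem _ (mem_imgf_of_mem h)
        exact Rset_lt hx1 hy2 (le_refl a)
      · have hy3 : (Φ σ) y ∈ R3 σ := by
          rw [← (hRspec σ).2.2]
          exact Finset.mem_image_of_mem _ (mem_imgf_of_mem h)
        exact Rset_lt hx1 hy3 (by omega)
    · intro x y hx hy
      have hx2 : (Φ σ) x ∈ R2 σ := by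
        rw [← (hRspec σ).2.1]
        exact Finset.mem_image_of_mem _ (mem_imgf_of_mem hx)
      have hy3 : (Φ σ) y ∈ R3 σ := by
        rw [← (hRspec σ).2.2]
        exact Finset.mem_image_of_mem _ (mem_imgf_of_mem hy)
      exact Rset_lt hx2 hy3 (le_refl _)
  have hcard_univ : (Finset.univ : Finset ({x // x ∈ X} ≃ Fin X.card)).card
      = Nat.factorial X.card := by
    rw [Finset.card_univ, Fintype.card_equiv (Fintype.equivFinOfCardEq (Fintype.card_coe X)),
      Fintype.card_coe]
  have hfib := Finset.card_eq_sum_card_fiberwise (f := Φ)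
      (s := Finset.univ) (t := Finset.filter (Esigma X A B) Finset.univ)
      (fun σ _ => Finset.mem_filter.2 ⟨Finset.mem_univ _, hΦE σ⟩)
  have hfbound : ∀ τ ∈ Finset.filter (Esigma X A B) Finset.univ,
      (Finset.univ.filter fun σ => Φ σ = τ).card ≤ m.choose a * (m - a).choose tt := by
    intro τ _
    set Tgt := ((P τ).powersetCard a).sigma
      (fun q => ((P τ \ q)).powersetCard tt) with hTgt
    have hQ1sub : ∀ σ, Q1 σ ⊆ P σ := fun σ => by
      rw [← hQunion σ]
      exact Finset.subset_union_left.trans Finset.subset_union_left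
    have hQ2sub : ∀ σ, Q2 σ ⊆ P σ := fun σ => by
      rw [← hQunion σ]
      exact Finset.subset_union_right.trans Finset.subset_union_left
    have hcard1 : ∀ σ, (Q1 σ).card = a := fun σ => card_imgf X (A \ B) hD1 σ
    have hcard2 : ∀ σ, (Q2 σ).card = tt := fun σ => card_imgf X (A ∩ B) hD2 σ
    have hmap : ∀ σ ∈ Finset.univ.filter (fun σ => Φ σ = τ),
        (⟨Q1 σ, Q2 σ⟩ : Σ _ : Finset (Fin X.card), Finset (Fin X.card)) ∈ Tgt := by
      intro σ hσ
      have hστ : Φ σ = τ := (Finset.mem_filter.1 hσ).2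
      have hPτ : P τ = P σ := by rw [← hστ]; exact hΦP σ
      rw [hTgt, Finset.mem_sigma]
      refine ⟨Finset.mem_powersetCard.2 ⟨hPτ ▸ hQ1sub σ, hcard1 σ⟩,
        Finset.mem_powersetCard.2 ⟨?_, hcard2 σ⟩⟩
      rw [hPτ]
      exact Finset.subset_sdiff.2 ⟨hQ2sub σ, (imgf_disjoint X _ _ hD1 hD2 σ dd12).symm⟩
    have hinjOn : ∀ σ ∈ Finset.univ.filter (fun σ => Φ σ = τ),
        ∀ σ' ∈ Finset.univ.filter (fun σ => Φ σ = τ),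
        (⟨Q1 σ, Q2 σ⟩ : Σ _ : Finset (Fin X.card), Finset (Fin X.card))
          = ⟨Q1 σ', Q2 σ'⟩ → σ = σ' := by
      intro σ hσ σ' hσ' heq
      have hστ : Φ σ = τ := (Finset.mem_filter.1 hσ).2
      have hστ' : Φ σ' = τ := (Finset.mem_filter.1 hσ').2
      obtain ⟨h1, h2⟩ := Sigma.mk.inj_iff.1 heq
      have h2' : Q2 σ = Q2 σ' := eq_of_heq h2
      have hPeq : P σ = P σ' := by rw [← hΦP σ, ← hΦP σ', hστ, hστ']
      have hdisj3 : ∀ σ'', Disjoint (Q1 σ'' ∪ Q2 σ'') (Q3 σ'') := fun σ'' =>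
        Finset.disjoint_union_left.2 ⟨imgf_disjoint X _ _ hD1 hD3 σ'' dd13,
          imgf_disjoint X _ _ hD2 hD3 σ'' dd23⟩
      have hQ3eq' : ∀ σ'', Q3 σ'' = P σ'' \ (Q1 σ'' ∪ Q2 σ'') := by
        intro σ''
        rw [← hQunion σ'', Finset.union_sdiff_cancel_left (hdisj3 σ'')]
      have h3 : Q3 σ = Q3 σ' := by
        rw [hQ3eq' σ, hQ3eq' σ', hPeq, h1, h2']
      have hR1eq : R1 σ = R1 σ' := by
        show Rset (P σ) (hPcard σ) 0 a = Rset (P σ') (hPcard σ') 0 a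
        exact Rset_congr hPeq _ _ _ _
      have hR2eq : R2 σ = R2 σ' := by
        show Rset (P σ) (hPcard σ) a (a + tt) = Rset (P σ') (hPcard σ') a (a + tt)
        exact Rset_congr hPeq _ _ _ _
      have hR3eq : R3 σ = R3 σ' := by
        show Rset (P σ) (hPcard σ) (a + tt) m = Rset (P σ') (hPcard σ') (a + tt) m
        exact Rset_congr hPeq _ _ _ _
      have hρeq : ρ σ = ρ σ' := by
        show rhoOf (Q1 σ) (Q2 σ) (Q3 σ) (R1 σ) (R2 σ) (R3 σ)
          = rhoOf (Q1 σ') (Q2 σ') (Q3 σ') (R1 σ') (R2 σ') (R3 σ')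
        rw [h1, h2', h3, hR1eq, hR2eq, hR3eq]
      have hΦeq : σ.trans (ρ σ) = σ'.trans (ρ σ) := by
        rw [show σ.trans (ρ σ) = Φ σ from rfl, hστ, hρeq,
          show σ'.trans (ρ σ') = Φ σ' from rfl, hστ']
      apply Equiv.ext
      intro x
      have hx := congrArg (fun (e : {x // x ∈ X} ≃ Fin X.card) => e x) hΦeq
      simp only [Equiv.trans_apply] at hx
      exact (ρ σ).injective hx
    calc (Finset.univ.filter fun σ => Φ σ = τ).card ≤ Tgt.card :=
          Finset.card_le_card_of_injOn _ hmap hinjOn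
      _ = m.choose a * (m - a).choose tt := by
          rw [hTgt, Finset.card_sigma]
          have : ∀ q ∈ (P τ).powersetCard a, ((P τ \ q).powersetCard tt).card
              = (m - a).choose tt := by
            intro q hq
            obtain ⟨hqsub, hqcard⟩ := Finset.mem_powersetCard.1 hq
            rw [Finset.card_powersetCard, Finset.card_sdiff_of_subset hqsub, hPcard τ, hqcard]
          rw [Finset.sum_congr rfl this, Finset.sum_const, Finset.card_powersetCard,
            hPcard τ, smul_eq_mul]
  have hN : Nat.factorial X.card ≤
      (Finset.filter (Esigma X A B) Finset.univ).card * (m.choose a * (m - a).choose tt) := by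
    rw [← hcard_univ, hfib]
    simpa using Finset.sum_le_card_nsmul _ _ _ hfbound
  have hma : m - a = B.card := by omega
  rw [← hma]
  exact hN

theorem Esigma_disjoint (X : Finset α) (t : ℕ) (Ai Bi Aj Bj : Finset α)
    (hAiX : Ai ⊆ X) (hBiX : Bi ⊆ X) (hAjX : Aj ⊆ X) (hBjX : Bj ⊆ X)
    (hti : (Ai ∩ Bi).card ≤ t) (htj : (Aj ∩ Bj).card ≤ t)
    (hbij : t ≤ (Ai ∩ Bj).card) (hbji : t ≤ (Aj ∩ Bi).card)
    (hcc1 : Ai ∩ Bi = Aj ∩ Bj → Ai ∩ Bj ≠ Ai ∩ Bi)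
    (hcc2 : Ai ∩ Bi = Aj ∩ Bj → Aj ∩ Bi ≠ Ai ∩ Bi)
    (σ : {x // x ∈ X} ≃ Fin X.card)
    (hi : Esigma X Ai Bi σ) (hj : Esigma X Aj Bj σ) : False := by
  classical
  -- derived order facts
  have i3 : ∀ x y : {x // x ∈ X}, ↑x ∈ Ai → ↑y ∈ Bi \ Ai → σ x < σ y := by
    intro x y hx hy
    by_cases hxB : ↑x ∈ Bi
    · exact hi.2 x y (Finset.mem_inter.2 ⟨hx, hxB⟩) hy
    · exact hi.1 x y (Finset.mem_sdiff.2 ⟨hx, hxB⟩) (Finset.mem_sdiff.1 hy).1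
  have j3 : ∀ x y : {x // x ∈ X}, ↑x ∈ Aj → ↑y ∈ Bj \ Aj → σ x < σ y := by
    intro x y hx hy
    by_cases hxB : ↑x ∈ Bj
    · exact hj.2 x y (Finset.mem_inter.2 ⟨hx, hxB⟩) hy
    · exact hj.1 x y (Finset.mem_sdiff.2 ⟨hx, hxB⟩) (Finset.mem_sdiff.1 hy).1
  by_cases h1 : Ai ∩ Bj ⊆ Aj <;> by_cases h2 : Aj ∩ Bi ⊆ Ai
  -- case: both inclusions hold
  · have hTsub : Ai ∩ Bj ⊆ Aj ∩ Bj :=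
      Finset.subset_inter h1 Finset.inter_subset_right
    have hT : Ai ∩ Bj = Aj ∩ Bj :=
      Finset.eq_of_subset_of_card_le hTsub (by
        have := Finset.card_le_card hTsub; omega)
    have hSsub : Aj ∩ Bi ⊆ Ai ∩ Bi :=
      Finset.subset_inter h2 Finset.inter_subset_right
    have hS : Aj ∩ Bi = Ai ∩ Bi :=
      Finset.eq_of_subset_of_card_le hSsub (by
        have := Finset.card_le_card hSsub; omega)
    by_cases hST : Ai ∩ Bi = Aj ∩ Bj
    · exact hcc1 hST (hT.trans hST.symm)
    · -- S ≠ T, same cardinality t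
      have hcS : (Ai ∩ Bi).card = t := by
        have := Finset.card_le_card hSsub
        have := Finset.card_le_card hTsub
        omega
      have hcT : (Aj ∩ Bj).card = t := by
        have := Finset.card_le_card hTsub; omega
      have hsdiff : ¬ (Ai ∩ Bi ⊆ Aj ∩ Bj) := fun hsub =>
        hST (Finset.eq_of_subset_of_card_le hsub (by omega))
      have husdiff : ¬ (Aj ∩ Bj ⊆ Ai ∩ Bi) := fun hsub =>
        hST ((Finset.eq_of_subset_of_card_le hsub (by omega)).symm)
      obtain ⟨s, hsS, hsT⟩ := Finset.not_subset.1 hsdiff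
      obtain ⟨u, huT, huS⟩ := Finset.not_subset.1 husdiff
      -- s ∈ Ai∩Bi = Aj∩Bi ⊆ Aj, s ∉ Aj∩Bj hence s ∈ Aj \ Bj
      have hsAj : s ∈ Aj := (Finset.mem_inter.1 (hS ▸ hsS)).1
      have hsBj : s ∉ Bj := fun h => hsT (Finset.mem_inter.2 ⟨hsAj, h⟩)
      have huAi : u ∈ Ai := (Finset.mem_inter.1 (hT ▸ huT)).1
      have huBi : u ∉ Bi := fun h => huS (Finset.mem_inter.2 ⟨huAi, h⟩)
      have hsX : s ∈ X := hAiX (Finset.mem_inter.1 hsS).1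
      have huX : u ∈ X := hAiX huAi
      have lt1 : σ ⟨s, hsX⟩ < σ ⟨u, huX⟩ :=
        hj.1 ⟨s, hsX⟩ ⟨u, huX⟩ (Finset.mem_sdiff.2 ⟨hsAj, hsBj⟩)
          (Finset.mem_inter.1 huT).2
      have lt2 : σ ⟨u, huX⟩ < σ ⟨s, hsX⟩ :=
        hi.1 ⟨u, huX⟩ ⟨s, hsX⟩ (Finset.mem_sdiff.2 ⟨huAi, huBi⟩)
          (Finset.mem_inter.1 hsS).2
      exact absurd lt1 (lt_asymm lt2)
  -- case: h1 holds, h2 fails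
  · have hTsub : Ai ∩ Bj ⊆ Aj ∩ Bj :=
      Finset.subset_inter h1 Finset.inter_subset_right
    have hT : Ai ∩ Bj = Aj ∩ Bj :=
      Finset.eq_of_subset_of_card_le hTsub (by
        have := Finset.card_le_card hTsub; omega)
    have hcT : (Aj ∩ Bj).card = t := by
      have := Finset.card_le_card hTsub; omega
    obtain ⟨x, hxAjBi, hxAi⟩ := Finset.not_subset.1 h2
    rcases Nat.eq_zero_or_pos t with ht0 | htpos
    · have hii : Ai ∩ Bi = ∅ := Finset.card_eq_zero.1 (by omega)
      have hjj : Aj ∩ Bj = ∅ := Finset.card_eq_zero.1 (by omega)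
      exact hcc1 (hii.trans hjj.symm) (by rw [hT, hjj, hii])
    · obtain ⟨w, hw⟩ := Finset.card_pos.1 (show 0 < (Aj ∩ Bj).card by omega)
      have hxAj : x ∈ Aj := (Finset.mem_inter.1 hxAjBi).1
      have hxBj : x ∉ Bj := fun h => hxAi
        (Finset.mem_inter.1 (hT ▸ Finset.mem_inter.2 ⟨hxAj, h⟩)).1
      have hwAi : w ∈ Ai := (Finset.mem_inter.1 (hT ▸ hw)).1
      have hxX : x ∈ X := hAjX hxAj
      have hwX : w ∈ X := hAiX hwAi
      have lt1 : σ ⟨x, hxX⟩ < σ ⟨w, hwX⟩ :=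
        hj.1 ⟨x, hxX⟩ ⟨w, hwX⟩ (Finset.mem_sdiff.2 ⟨hxAj, hxBj⟩)
          (Finset.mem_inter.1 hw).2
      have lt2 : σ ⟨w, hwX⟩ < σ ⟨x, hxX⟩ :=
        i3 ⟨w, hwX⟩ ⟨x, hxX⟩ hwAi
          (Finset.mem_sdiff.2 ⟨(Finset.mem_inter.1 hxAjBi).2, hxAi⟩)
      exact absurd lt1 (lt_asymm lt2)
  -- case: h1 fails, h2 holds
  · have hSsub : Aj ∩ Bi ⊆ Ai ∩ Bi :=
      Finset.subset_inter h2 Finset.inter_subset_right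
    have hS : Aj ∩ Bi = Ai ∩ Bi :=
      Finset.eq_of_subset_of_card_le hSsub (by
        have := Finset.card_le_card hSsub; omega)
    have hcS : (Ai ∩ Bi).card = t := by
      have := Finset.card_le_card hSsub; omega
    obtain ⟨y, hyAiBj, hyAj⟩ := Finset.not_subset.1 h1
    rcases Nat.eq_zero_or_pos t with ht0 | htpos
    · have hii : Ai ∩ Bi = ∅ := Finset.card_eq_zero.1 (by omega)
      have hjj : Aj ∩ Bj = ∅ := Finset.card_eq_zero.1 (by omega)
      exact hcc2 (hii.trans hjj.symm) (by rw [hS, hii])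
    · obtain ⟨w, hw⟩ := Finset.card_pos.1 (show 0 < (Ai ∩ Bi).card by omega)
      have hyAi : y ∈ Ai := (Finset.mem_inter.1 hyAiBj).1
      have hyBi : y ∉ Bi := fun h => hyAj
        (Finset.mem_inter.1 (hS ▸ Finset.mem_inter.2 ⟨hyAi, h⟩)).1
      have hwAj : w ∈ Aj := (Finset.mem_inter.1 (hS ▸ hw)).1
      have hyX : y ∈ X := hAiX hyAi
      have hwX : w ∈ X := hAjX hwAj
      have lt1 : σ ⟨y, hyX⟩ < σ ⟨w, hwX⟩ :=
        hi.1 ⟨y, hyX⟩ ⟨w, hwX⟩ (Finset.mem_sdiff.2 ⟨hyAi, hyBi⟩)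
          (Finset.mem_inter.1 hw).2
      have lt2 : σ ⟨w, hwX⟩ < σ ⟨y, hyX⟩ :=
        j3 ⟨w, hwX⟩ ⟨y, hyX⟩ hwAj
          (Finset.mem_sdiff.2 ⟨(Finset.mem_inter.1 hyAiBj).2, hyAj⟩)
      exact absurd lt1 (lt_asymm lt2)
  -- case: both fail
  · obtain ⟨y, hyAiBj, hyAj⟩ := Finset.not_subset.1 h1
    obtain ⟨x, hxAjBi, hxAi⟩ := Finset.not_subset.1 h2
    have hyAi : y ∈ Ai := (Finset.mem_inter.1 hyAiBj).1
    have hxAj : x ∈ Aj := (Finset.mem_inter.1 hxAjBi).1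
    have hyX : y ∈ X := hAiX hyAi
    have hxX : x ∈ X := hAjX hxAj
    have lt1 : σ ⟨x, hxX⟩ < σ ⟨y, hyX⟩ :=
      j3 ⟨x, hxX⟩ ⟨y, hyX⟩ hxAj
        (Finset.mem_sdiff.2 ⟨(Finset.mem_inter.1 hyAiBj).2, hyAj⟩)
    have lt2 : σ ⟨y, hyX⟩ < σ ⟨x, hxX⟩ :=
      i3 ⟨y, hyX⟩ ⟨x, hxX⟩ hyAi
        (Finset.mem_sdiff.2 ⟨(Finset.mem_inter.1 hxAjBi).2, hxAi⟩)
    exact absurd lt1 (lt_asymm lt2)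

end count

theorem stmt_7 {ι α : Type*} [DecidableEq α] (t : ℕ) (I : Finset ι)
    (A B : ι → Finset α)
    (ha : ∀ i ∈ I, (A i ∩ B i).card ≤ t)
    (hb : ∀ i ∈ I, ∀ j ∈ I, i ≠ j → t ≤ (A i ∩ B j).card)
    (hc : ∀ i ∈ I, ∀ j ∈ I, i ≠ j → A i ∩ B i = A j ∩ B j →
      A i ∩ B j ≠ A i ∩ B i ∧ A j ∩ B i ≠ A i ∩ B i) :
    ∑ i ∈ I, ((((A i ∪ B i).card.choose ((A i \ B i).card) : ℕ) : ℝ))⁻¹ *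
      ((((B i).card.choose ((A i ∩ B i).card) : ℕ) : ℝ))⁻¹ ≤ 1 := by
  classical
  set X := I.biUnion (fun i => A i ∪ B i) with hX
  have hsub : ∀ i ∈ I, A i ∪ B i ⊆ X := fun i hi => Finset.subset_biUnion_of_mem (fun i => A i ∪ B i) hi
  have hAX : ∀ i ∈ I, A i ⊆ X := fun i hi => Finset.subset_union_left.trans (hsub i hi)
  have hBX : ∀ i ∈ I, B i ⊆ X := fun i hi => Finset.subset_union_right.trans (hsub i hi)
  set N := Nat.factorial X.card with hNdef
  have hNpos : 0 < N := Nat.factorial_pos _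
  set W : ι → Finset ({x // x ∈ X} ≃ Fin X.card) :=
    fun i => Finset.filter (Esigma X (A i) (B i)) Finset.univ with hW
  have hkey : ∀ i ∈ I, N ≤ (W i).card *
      ((A i ∪ B i).card.choose ((A i \ B i).card) *
        ((B i).card.choose ((A i ∩ B i).card))) :=
    fun i hi => count_lemma X (A i) (B i) (hAX i hi) (hBX i hi)
  have hdisj : ∀ i ∈ I, ∀ j ∈ I, i ≠ j → Disjoint (W i) (W j) := by
    intro i hi j hj hij
    rw [Finset.disjoint_left]
    intro σ hσi hσj
    exact Esigma_disjoint X t (A i) (B i) (A j) (B j)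
      (hAX i hi) (hBX i hi) (hAX j hj) (hBX j hj)
      (ha i hi) (ha j hj) (hb i hi j hj hij) (hb j hj i hi hij.symm)
      (fun h => (hc i hi j hj hij h).1) (fun h => (hc i hi j hj hij h).2)
      σ (Finset.mem_filter.1 hσi).2 (Finset.mem_filter.1 hσj).2
  have hsum : ∑ i ∈ I, (W i).card ≤ N := by
    calc ∑ i ∈ I, (W i).card = (I.biUnion W).card := (Finset.card_biUnion hdisj).symm
      _ ≤ (Finset.univ : Finset ({x // x ∈ X} ≃ Fin X.card)).card := Finset.card_le_univ _
      _ = N := by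
          rw [Finset.card_univ,
            Fintype.card_equiv (Fintype.equivFinOfCardEq (Fintype.card_coe X)),
            Fintype.card_coe]
  have hterm : ∀ i ∈ I,
      ((((A i ∪ B i).card.choose ((A i \ B i).card) : ℕ) : ℝ))⁻¹ *
        ((((B i).card.choose ((A i ∩ B i).card) : ℕ) : ℝ))⁻¹
      ≤ ((W i).card : ℝ) / (N : ℝ) := by
    intro i hi
    set c1 := (A i ∪ B i).card.choose ((A i \ B i).card) with hc1
    set c2 := (B i).card.choose ((A i ∩ B i).card) with hc2
    have hc1pos : 0 < c1 :=
      Nat.choose_pos (Finset.card_le_card (Finset.sdiff_subset.trans Finset.subset_union_left))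
    have hc2pos : 0 < c2 :=
      Nat.choose_pos (Finset.card_le_card Finset.inter_subset_right)
    have hkeyR : (N : ℝ) ≤ ((W i).card : ℝ) * ((c1 : ℝ) * (c2 : ℝ)) := by
      have := hkey i hi
      exact_mod_cast this
    rw [← mul_inv]
    rw [le_div_iff₀ (by exact_mod_cast hNpos)]
    rw [inv_mul_le_iff₀ (by positivity)]
    calc (N : ℝ) ≤ ((W i).card : ℝ) * ((c1 : ℝ) * (c2 : ℝ)) := hkeyR
      _ = (c1 : ℝ) * (c2 : ℝ) * ((W i).card : ℝ) := by ring
  calc ∑ i ∈ I, ((((A i ∪ B i).card.choose ((A i \ B i).card) : ℕ) : ℝ))⁻¹ *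
        ((((B i).card.choose ((A i ∩ B i).card) : ℕ) : ℝ))⁻¹
      ≤ ∑ i ∈ I, ((W i).card : ℝ) / (N : ℝ) := Finset.sum_le_sum hterm
    _ = (∑ i ∈ I, ((W i).card : ℝ)) / (N : ℝ) := by rw [Finset.sum_div]
    _ ≤ (N : ℝ) / (N : ℝ) := by
        gcongr
        exact_mod_cast hsum
    _ = 1 := div_self (by exact_mod_cast hNpos.ne')
end

section
/- Let $t \ge 1$ and let $\{(A_i, B_i) : i \in I\}$ be a finite collection of pairs of finite sets such that: (a) $|A_i \cap B_i| \le t$ for each $i$; (b) $|A_i \cap B_j| \ge t$ for all $i \ne j$; (c') for $i \ne j$ with $A_i \cap B_i = A_j \cap B_j$, it is not the case that $A_i \cap B_j = A_i \cap B_i = A_j \cap B_i$. Then $\sum_{i \in I} \binom{|A_i \cup B_i|}{|A_i \setminus B_i|}^{-1} \binom{|B_i|}{|A_i \cap B_i|}^{-1} \le 1$. -/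
/-!
Following Talbot, order the ground set uniformly at random and let `E i` be the event that
`A i \ B i` precedes `A i ∩ B i`, which precedes `B i \ A i`. Its probability is
`|A i \ B i|! |A i ∩ B i|! |B i \ A i|! / |A i ∪ B i|!`, which is exactly the `i`-th summand.
The events are pairwise disjoint: if `E i` and `E j` both hold and the last element of
`A i ∪ A j` lies in `A j`, then (a) and (b) force
`A i ∩ B j = A i ∩ B i = A j ∩ B i = A j ∩ B j`, which (c') forbids.
-/

open Finset
open scoped Nat

theorem Fintype.card_equiv_comp_eq {β γ κ : Type*} [Fintype β] [Fintype γ] [Fintype κ]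
    [DecidableEq β] [DecidableEq γ] [DecidableEq κ] (c : β → κ) (d : γ → κ)
    (h : ∀ k, Fintype.card {x // c x = k} = Fintype.card {y // d y = k}) :
    Fintype.card {g : β ≃ γ // d ∘ g = c} = ∏ k, (Fintype.card {x // c x = k})! := by
  obtain ⟨g₀, hg₀⟩ : ∃ g₀ : β ≃ γ, ∀ x, d (g₀ x) = c x :=
    ⟨_, Equiv.ofFiberEquiv_map fun k => Fintype.equivOfCardEq (h k)⟩
  have hc (y : γ) : c (g₀.symm y) = d y := by rw [← hg₀, Equiv.apply_symm_apply]
  rw [← DomMulAct.stabilizer_card c]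
  refine Fintype.card_congr ((Equiv.refl β).equivCongr g₀.symm |>.subtypeEquiv fun g => ?_)
  simp [funext_iff, hc]

noncomputable def patternColouring {ι γ κ : Type*} (e : ι → γ) (b : ι → κ) : γ → Option κ :=
  Function.extend e (some ∘ b) fun _ => none

section patternColouring

variable {ι γ κ : Type*} {e : ι → γ} {b : ι → κ}

theorem patternColouring_apply (he : e.Injective) (i : ι) :
    patternColouring e b (e i) = some (b i) :=
  he.extend_apply _ _ i

theorem patternColouring_eq_none {k : γ} (hk : k ∉ Set.range e) : patternColouring e b k = none :=
  Function.extend_apply' _ _ k hk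

theorem patternColouring_eq_some_iff (he : e.Injective) {k : γ} {j : κ} :
    patternColouring e b k = some j ↔ ∃ i, b i = j ∧ e i = k := by
  by_cases hk : k ∈ Set.range e
  · obtain ⟨i, rfl⟩ := hk
    simp [patternColouring_apply he, he.eq_iff]
  · rw [patternColouring_eq_none hk]
    simp_all

theorem patternColouring_eq_none_iff (he : e.Injective) {k : γ} :
    patternColouring e b k = none ↔ k ∉ Set.range e := by
  refine ⟨?_, patternColouring_eq_none⟩
  rintro hk ⟨i, rfl⟩
  simp [patternColouring_apply he] at hk

theorem lt_of_patternColouring_lt [LinearOrder ι] [Preorder γ] [LinearOrder κ] (he : StrictMono e)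
    (hb : Monotone b) {k l : γ} {i j : κ} (hk : patternColouring e b k = some i)
    (hl : patternColouring e b l = some j) (hij : i < j) : k < l := by
  obtain ⟨i, rfl, rfl⟩ := (patternColouring_eq_some_iff he.injective).1 hk
  obtain ⟨j, rfl, rfl⟩ := (patternColouring_eq_some_iff he.injective).1 hl
  exact he (hb.reflect_lt hij)

variable [Fintype ι] [Fintype γ] [DecidableEq γ]

theorem card_patternColouring_eq_some [DecidableEq κ] (he : e.Injective) (j : κ) :
    Fintype.card {k // patternColouring e b k = some j} = Fintype.card {i // b i = j} := by
  simp only [Fintype.card_subtype]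
  rw [← card_map ⟨e, he⟩]
  congr 1
  ext k
  simp [patternColouring_eq_some_iff he]

theorem card_patternColouring_eq_none_add_card (he : e.Injective) :
    Fintype.card {k // patternColouring e b k = none} + Fintype.card ι = Fintype.card γ := by
  have hrange : univ.filter (fun k => k ∉ Set.range e) = (univ.map ⟨e, he⟩)ᶜ := by
    ext; simp
  rw [Fintype.card_subtype, filter_congr fun k _ => patternColouring_eq_none_iff he, hrange,
    card_compl, card_map, card_univ, Nat.sub_add_cancel (Fintype.card_le_of_injective e he)]

end patternColouring

def OrdersColours {β γ κ : Type*} [LT γ] [LT κ] (c : β → Option κ) (g : β → γ) : Prop :=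
  ∀ x y i j, c x = some i → c y = some j → i < j → g x < g y

instance {β γ κ : Type*} [Fintype β] [LT γ] [DecidableLT γ] [Fintype κ] [DecidableEq κ] [LT κ]
    [DecidableLT κ] (c : β → Option κ) (g : β → γ) : Decidable (OrdersColours c g) := by
  unfold OrdersColours; infer_instance

-- Each `M` of size `m` carries the colouring listing the colours of `b` along `M` in increasing
-- order; the bijections pulling it back to `c` order the colours, and no bijection arises from
-- two different `M`.
theorem choose_mul_prod_factorial_le_card_ordersColours {β κ : Type*} [Fintype β]
    [DecidableEq β] [LinearOrder κ] [Fintype κ] {m : ℕ} (c : β → Option κ) (b : Fin m → κ)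
    (hb : Monotone b) (hfib : ∀ j, Fintype.card {x // c x = some j} = Fintype.card {i // b i = j})
    (hnone : Fintype.card {x // c x = none} + m = Fintype.card β) :
    (Fintype.card β).choose m * ∏ o, (Fintype.card {x // c x = o})! ≤
      Fintype.card {g : β ≃ Fin (Fintype.card β) // OrdersColours c g} := by
  set n := Fintype.card β
  let e (M : {M : Finset (Fin n) // #M = m}) : Fin m ↪o Fin n := M.1.orderEmbOfFin M.2
  let d (M : {M : Finset (Fin n) // #M = m}) : Fin n → Option κ := patternColouring (e M) b
  have hd_fibre (M) (o : Option κ) :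
      Fintype.card {x // c x = o} = Fintype.card {k // d M k = o} := by
    cases o with
    | none =>
      have := card_patternColouring_eq_none_add_card (b := b) (e M).injective
      simp only [Fintype.card_fin] at this
      simp only [d]
      omega
    | some j => rw [hfib, card_patternColouring_eq_some (e M).injective]
  have hd_inj : Function.Injective d := by
    intro M M' h
    ext k
    have hM (M : {M : Finset (Fin n) // #M = m}) : k ∈ M.1 ↔ d M k ≠ none := by
      rw [Ne, patternColouring_eq_none_iff (e M).injective, not_not, range_orderEmbOfFin,
        Finset.mem_coe]
    rw [hM, hM, h]
  have hordered (M) (g : β ≃ Fin n) (hg : d M ∘ g = c) : OrdersColours c g :=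
    fun x y i j hx hy hij => lt_of_patternColouring_lt (e M).strictMono hb
      (by rw [← hx, ← hg]; rfl) (by rw [← hy, ← hg]; rfl) hij
  let F (p : Σ M, {g : β ≃ Fin n // d M ∘ g = c}) : {g : β ≃ Fin n // OrdersColours c g} :=
    ⟨p.2.1, hordered p.1 p.2.1 p.2.2⟩
  have hF : F.Injective := by
    rintro ⟨M, g, hg⟩ ⟨M', g', hg'⟩ h
    obtain rfl : g = g' := congrArg Subtype.val h
    obtain rfl : M = M' := hd_inj (g.surjective.injective_comp_right (hg.trans hg'.symm))
    rfl
  calc n.choose m * ∏ o, (Fintype.card {x // c x = o})!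
      = ∑ M, Fintype.card {g : β ≃ Fin n // d M ∘ g = c} := by
        simp [Fintype.card_equiv_comp_eq c _ (hd_fibre _), Fintype.card_finset_len]
    _ = _ := Fintype.card_sigma.symm
    _ ≤ _ := Fintype.card_le_of_injective F hF

theorem Fin.card_subtype_le_and_lt {m a b : ℕ} (hb : b ≤ m) :
    Fintype.card {i : Fin m // a ≤ i ∧ i < b} = b - a := by
  rw [Fintype.card_subtype, ← card_map Fin.valEmbedding, ← Nat.card_Ico a b]
  congr 1
  ext k
  simp only [mem_map, mem_filter, mem_univ, true_and, Fin.valEmbedding_apply, mem_Ico]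
  exact ⟨by rintro ⟨i, hi, rfl⟩; exact hi, fun hk => ⟨⟨k, by omega⟩, hk, rfl⟩⟩

def threeBlocks {m : ℕ} (s t : ℕ) (i : Fin m) : Fin 3 :=
  if (i : ℕ) < s then 0 else if (i : ℕ) < s + t then 1 else 2

theorem threeBlocks_monotone {m : ℕ} (s t : ℕ) : Monotone (threeBlocks (m := m) s t) := by
  intro i j hij
  have : (i : ℕ) ≤ j := hij
  unfold threeBlocks
  split_ifs <;> first | decide | omega

theorem card_threeBlocks {s t u : ℕ} (j : Fin 3) :
    Fintype.card {i : Fin (s + t + u) // threeBlocks s t i = j} = ![s, t, u] j := by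
  have key (a b : ℕ) (hb : b ≤ s + t + u) (h : ∀ i : Fin (s + t + u),
      threeBlocks s t i = j ↔ a ≤ i ∧ i < b) :
      Fintype.card {i : Fin (s + t + u) // threeBlocks s t i = j} = b - a := by
    rw [← Fin.card_subtype_le_and_lt hb]
    exact Fintype.card_congr (Equiv.subtypeEquivRight h)
  fin_cases j
  · rw [key 0 s (by omega) fun i => by unfold threeBlocks; split_ifs <;> simp <;> omega]; simp
  · rw [key s (s + t) (by omega) fun i => by unfold threeBlocks; split_ifs <;> simp <;> omega]
    simp
  · rw [key (s + t) (s + t + u) le_rfl fun i => by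
      have := i.2; unfold threeBlocks; split_ifs <;> simp <;> omega]
    simp

theorem Nat.factorial_eq_choose_mul_factorials_mul_choose {n s t u : ℕ} (h : s + t + u ≤ n) :
    n ! = n.choose (s + t + u) * ((n - (s + t + u))! * (s ! * t ! * u !)) *
      ((s + t + u).choose s * (t + u).choose t) := by
  have h₁ := Nat.choose_mul_factorial_mul_factorial h
  have h₂ := Nat.choose_mul_factorial_mul_factorial (show s ≤ s + t + u by omega)
  have h₃ := Nat.choose_mul_factorial_mul_factorial (show t ≤ t + u by omega)
  rw [show s + t + u - s = t + u by omega] at h₂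
  rw [show t + u - t = u by omega] at h₃
  rw [← h₁, ← h₂, ← h₃]
  ring

section PairOrdered

variable {β γ : Type*} [DecidableEq β]

def PairOrdered [LT γ] (f : β → γ) (A B : Finset β) : Prop :=
  (∀ x ∈ A \ B, ∀ y ∈ B, f x < f y) ∧ ∀ x ∈ A, ∀ y ∈ B \ A, f x < f y

instance [LT γ] [DecidableLT γ] (f : β → γ) (A B : Finset β) : Decidable (PairOrdered f A B) := by
  unfold PairOrdered; infer_instance

variable [LinearOrder γ] {f : β → γ} {A B A₁ B₁ A₂ B₂ : Finset β} {x y : β}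

theorem PairOrdered.mem_of_le (h : PairOrdered f A B) (hx : x ∈ A) (hy : y ∈ B)
    (hyx : f y ≤ f x) : x ∈ B ∧ y ∈ A := by
  constructor
  · by_contra hxB
    exact (h.1 x (mem_sdiff.2 ⟨hx, hxB⟩) y hy).not_ge hyx
  · by_contra hyA
    exact (h.2 x hx y (mem_sdiff.2 ⟨hy, hyA⟩)).not_ge hyx

theorem PairOrdered.mem_or_mem (h₁ : PairOrdered f A₁ B₁) (h₂ : PairOrdered f A₂ B₂)
    (hx : x ∈ A₁ ∩ B₂) (hy : y ∈ A₂ ∩ B₁) : (x ∈ B₁ ∧ y ∈ A₁) ∨ (y ∈ B₂ ∧ x ∈ A₂) := by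
  rw [mem_inter] at hx hy
  exact (le_total (f y) (f x)).imp (h₁.mem_of_le hx.1 hy.2) (h₂.mem_of_le hy.1 hx.2)

theorem inter_eq_of_pairOrdered {t : ℕ} (ht : 1 ≤ t) (ha₁ : #(A₁ ∩ B₁) ≤ t)
    (ha₂ : #(A₂ ∩ B₂) ≤ t) (hb₁₂ : t ≤ #(A₁ ∩ B₂)) (hb₂₁ : t ≤ #(A₂ ∩ B₁))
    (h₁ : PairOrdered f A₁ B₁) (h₂ : PairOrdered f A₂ B₂) {z : β} (hz : z ∈ A₂)
    (hmax : ∀ x ∈ A₁, f x ≤ f z) :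
    A₁ ∩ B₂ = A₁ ∩ B₁ ∧ A₁ ∩ B₁ = A₂ ∩ B₁ ∧ A₁ ∩ B₁ = A₂ ∩ B₂ := by
  have h₁₂ : A₁ ∩ B₂ = A₂ ∩ B₂ := by
    refine eq_of_subset_of_card_le (fun y hy => ?_) (ha₂.trans hb₁₂)
    rw [mem_inter] at hy ⊢
    exact ⟨(h₂.mem_of_le hz hy.2 (hmax y hy.1)).2, hy.2⟩
  have hsub₂ : A₂ ∩ B₂ ⊆ A₁ := h₁₂ ▸ inter_subset_left
  obtain ⟨w, hw⟩ : (A₂ ∩ B₂).Nonempty := card_pos.1 (by rw [← h₁₂]; omega)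
  have hw' : w ∈ A₁ ∩ B₂ := h₁₂ ▸ hw
  have h₂₁ : A₂ ∩ B₁ = A₁ ∩ B₁ := by
    refine eq_of_subset_of_card_le (fun y hy => mem_inter.2 ⟨?_, (mem_inter.1 hy).2⟩)
      (ha₁.trans hb₂₁)
    rcases h₁.mem_or_mem h₂ hw' hy with ⟨-, hyA₁⟩ | ⟨hyB₂, -⟩
    · exact hyA₁
    · exact hsub₂ (mem_inter.2 ⟨(mem_inter.1 hy).1, hyB₂⟩)
  have hsub₁ : A₁ ∩ B₁ ⊆ A₂ := h₂₁ ▸ inter_subset_left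
  have hcard₁ : #(A₂ ∩ B₂) ≤ #(A₁ ∩ B₁) := h₂₁ ▸ ha₂.trans hb₂₁
  have hcard₂ : #(A₁ ∩ B₁) ≤ #(A₂ ∩ B₂) := h₁₂ ▸ ha₁.trans hb₁₂
  have h₃ : A₁ ∩ B₁ = A₂ ∩ B₂ := by
    by_cases hc : A₂ ∩ B₂ ⊆ B₁
    · exact (eq_of_subset_of_card_le (subset_inter hsub₂ hc) hcard₂).symm
    · obtain ⟨x, hx, hxB₁⟩ := not_subset.1 hc
      refine eq_of_subset_of_card_le (fun y hy => ?_) hcard₁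
      rcases h₁.mem_or_mem h₂ (h₁₂ ▸ hx) (h₂₁ ▸ hy) with ⟨hxB₁', -⟩ | ⟨hyB₂, -⟩
      · exact absurd hxB₁' hxB₁
      · exact mem_inter.2 ⟨hsub₁ hy, hyB₂⟩
  exact ⟨h₁₂.trans h₃.symm, h₂₁.symm, h₃⟩

theorem not_pairOrdered_and_pairOrdered {t : ℕ} (ht : 1 ≤ t) (ha₁ : #(A₁ ∩ B₁) ≤ t)
    (ha₂ : #(A₂ ∩ B₂) ≤ t) (hb₁₂ : t ≤ #(A₁ ∩ B₂)) (hb₂₁ : t ≤ #(A₂ ∩ B₁))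
    (hc₁₂ : A₁ ∩ B₁ = A₂ ∩ B₂ → ¬(A₁ ∩ B₂ = A₁ ∩ B₁ ∧ A₁ ∩ B₁ = A₂ ∩ B₁))
    (hc₂₁ : A₂ ∩ B₂ = A₁ ∩ B₁ → ¬(A₂ ∩ B₁ = A₂ ∩ B₂ ∧ A₂ ∩ B₂ = A₁ ∩ B₂)) :
    ¬(PairOrdered f A₁ B₁ ∧ PairOrdered f A₂ B₂) := by
  rintro ⟨h₁, h₂⟩
  have hne : (A₁ ∪ A₂).Nonempty := by
    obtain ⟨x, hx⟩ := card_pos.1 (ht.trans hb₁₂)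
    exact ⟨x, mem_union_left _ (mem_inter.1 hx).1⟩
  obtain ⟨z, hz, hmax⟩ := exists_max_image (A₁ ∪ A₂) f hne
  rcases mem_union.1 hz with hz | hz
  · obtain ⟨e₁, e₂, e₃⟩ := inter_eq_of_pairOrdered ht ha₂ ha₁ hb₂₁ hb₁₂ h₂ h₁ hz
      fun x hx => hmax x (mem_union_right _ hx)
    exact hc₂₁ e₃ ⟨e₁, e₂⟩
  · obtain ⟨e₁, e₂, e₃⟩ := inter_eq_of_pairOrdered ht ha₁ ha₂ hb₁₂ hb₂₁ h₁ h₂ hz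
      fun x hx => hmax x (mem_union_left _ hx)
    exact hc₁₂ e₃ ⟨e₁, e₂⟩

end PairOrdered

section pairColouring

variable {β : Type*} [DecidableEq β]

def pairColouring (A B : Finset β) (x : β) : Option (Fin 3) :=
  if x ∈ A then (if x ∈ B then some 1 else some 0) else if x ∈ B then some 2 else none

theorem pairOrdered_of_ordersColours {γ : Type*} [LT γ] {A B : Finset β} {f : β → γ}
    (h : OrdersColours (pairColouring A B) f) : PairOrdered f A B := by
  refine ⟨fun x hx y hy => ?_, fun x hx y hy => ?_⟩ <;> rw [mem_sdiff] at *
  · by_cases hyA : y ∈ A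
    · exact h x y 0 1 (by simp [pairColouring, hx]) (by simp [pairColouring, hy, hyA]) (by decide)
    · exact h x y 0 2 (by simp [pairColouring, hx]) (by simp [pairColouring, hy, hyA]) (by decide)
  · by_cases hxB : x ∈ B
    · exact h x y 1 2 (by simp [pairColouring, hx, hxB]) (by simp [pairColouring, hy]) (by decide)
    · exact h x y 0 2 (by simp [pairColouring, hx, hxB]) (by simp [pairColouring, hy]) (by decide)

variable [Fintype β]

theorem card_pairColouring_eq (A B : Finset β) :
    ∀ j, Fintype.card {x // pairColouring A B x = some j} = ![#(A \ B), #(A ∩ B), #(B \ A)] j := by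
  have key (S : Finset β) (j : Fin 3) (h : ∀ x, pairColouring A B x = some j ↔ x ∈ S) :
      Fintype.card {x // pairColouring A B x = some j} = #S := by
    rw [← Fintype.card_coe]
    exact Fintype.card_congr (Equiv.subtypeEquivRight h)
  intro j
  fin_cases j <;> refine key _ _ fun x => ?_ <;> unfold pairColouring <;> split_ifs <;> simp_all

theorem card_pairColouring_eq_none_add (A B : Finset β) :
    Fintype.card {x // pairColouring A B x = none} + #(A ∪ B) = Fintype.card β := by
  have h (x : β) : pairColouring A B x = none ↔ x ∈ (A ∪ B)ᶜ := by
    unfold pairColouring; split_ifs <;> simp_all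
  rw [Fintype.card_congr (Equiv.subtypeEquivRight h), Fintype.card_coe, card_compl,
    Nat.sub_add_cancel (card_le_univ _)]

end pairColouring

theorem factorial_le_card_pairOrdered_mul {β : Type*} [Fintype β] [DecidableEq β]
    (A B : Finset β) :
    (Fintype.card β)! ≤ Fintype.card {g : β ≃ Fin (Fintype.card β) // PairOrdered g A B} *
      ((#(A ∪ B)).choose #(A \ B) * (#B).choose #(A ∩ B)) := by
  have hB : #B = #(A ∩ B) + #(B \ A) := by
    rw [inter_comm, add_comm, card_sdiff_add_card_inter]
  have hAB : #(A ∪ B) = #(A \ B) + #(A ∩ B) + #(B \ A) := by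
    rw [add_assoc, ← hB, card_sdiff_add_card]
  have hcount := choose_mul_prod_factorial_le_card_ordersColours (pairColouring A B)
    (threeBlocks #(A \ B) #(A ∩ B)) (threeBlocks_monotone _ _)
    (fun j => by rw [card_pairColouring_eq, card_threeBlocks])
    (by rw [← hAB, card_pairColouring_eq_none_add])
  have hnone : Fintype.card {x // pairColouring A B x = none} =
      Fintype.card β - (#(A \ B) + #(A ∩ B) + #(B \ A)) := by
    have := card_pairColouring_eq_none_add A B
    omega
  rw [Fintype.prod_option, Fin.prod_univ_three, hnone] at hcount
  simp only [card_pairColouring_eq, Matrix.cons_val_zero, Matrix.cons_val_one,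
    Matrix.cons_val_two, Matrix.head_cons, Matrix.tail_cons] at hcount
  rw [hAB, hB]
  calc (Fintype.card β)! = _ := Nat.factorial_eq_choose_mul_factorials_mul_choose
        (hAB ▸ card_le_univ (A ∪ B))
    _ ≤ _ := Nat.mul_le_mul_right _ hcount
    _ ≤ _ := Nat.mul_le_mul_right _ (Fintype.card_subtype_mono _ _
        fun (g : β ≃ Fin (Fintype.card β)) => pairOrdered_of_ordersColours)

theorem sum_inv_choose_mul_inv_choose_le_one {ι β : Type*} [Fintype β] [DecidableEq β]
    {t : ℕ} (ht : 1 ≤ t) (I : Finset ι) (A B : ι → Finset β)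
    (ha : ∀ i ∈ I, #(A i ∩ B i) ≤ t)
    (hb : ∀ i ∈ I, ∀ j ∈ I, i ≠ j → t ≤ #(A i ∩ B j))
    (hc' : ∀ i ∈ I, ∀ j ∈ I, i ≠ j → A i ∩ B i = A j ∩ B j →
      ¬(A i ∩ B j = A i ∩ B i ∧ A i ∩ B i = A j ∩ B i)) :
    ∑ i ∈ I, (((#(A i ∪ B i)).choose #(A i \ B i) : ℕ) : ℝ)⁻¹ *
      (((#(B i)).choose #(A i ∩ B i) : ℕ) : ℝ)⁻¹ ≤ 1 := by
  set n := Fintype.card β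
  let E (i : ι) : Finset (β ≃ Fin n) := {g | PairOrdered g (A i) (B i)}
  have hdisj : (I : Set ι).PairwiseDisjoint E := fun i hi j hj hij =>
    disjoint_filter.2 fun g _ hgi hgj => not_pairOrdered_and_pairOrdered ht (ha i hi) (ha j hj)
      (hb i hi j hj hij) (hb j hj i hi hij.symm) (hc' i hi j hj hij) (hc' j hj i hi hij.symm)
      ⟨hgi, hgj⟩
  have hterm (i : ι) : (((#(A i ∪ B i)).choose #(A i \ B i) : ℕ) : ℝ)⁻¹ *
      (((#(B i)).choose #(A i ∩ B i) : ℕ) : ℝ)⁻¹ ≤ #(E i) / (n ! : ℝ) := by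
    have h₁ : 0 < (#(A i ∪ B i)).choose #(A i \ B i) :=
      Nat.choose_pos (card_le_card (sdiff_subset.trans subset_union_left))
    have h₂ : 0 < (#(B i)).choose #(A i ∩ B i) := Nat.choose_pos (card_le_card inter_subset_right)
    have hle := factorial_le_card_pairOrdered_mul (A i) (B i)
    rw [Fintype.card_subtype] at hle
    rw [← mul_inv, inv_eq_one_div, div_le_div_iff₀ (by positivity) (by positivity), one_mul]
    exact_mod_cast hle
  calc _ ≤ ∑ i ∈ I, (#(E i) : ℝ) / n ! := sum_le_sum fun i _ => hterm i
    _ = #(I.biUnion E) / n ! := by rw [card_biUnion hdisj, Nat.cast_sum, sum_div]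
    _ ≤ 1 := by
      rw [div_le_one (by positivity)]
      exact_mod_cast (card_le_univ _).trans_eq (by simp [n])

theorem stmt_8 {ι α : Type*} [DecidableEq α] (t : ℕ) (ht : 1 ≤ t) (I : Finset ι)
    (A B : ι → Finset α)
    (ha : ∀ i ∈ I, (A i ∩ B i).card ≤ t)
    (hb : ∀ i ∈ I, ∀ j ∈ I, i ≠ j → t ≤ (A i ∩ B j).card)
    (hc' : ∀ i ∈ I, ∀ j ∈ I, i ≠ j → A i ∩ B i = A j ∩ B j →
      ¬(A i ∩ B j = A i ∩ B i ∧ A i ∩ B i = A j ∩ B i)) :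
    ∑ i ∈ I, ((((A i ∪ B i).card.choose ((A i \ B i).card) : ℕ) : ℝ))⁻¹ *
      ((((B i).card.choose ((A i ∩ B i).card) : ℕ) : ℝ))⁻¹ ≤ 1 := by
  set X := I.biUnion fun i => A i ∪ B i
  let e := Function.Embedding.subtype (· ∈ X)
  let A' i := (A i).subtype (· ∈ X)
  let B' i := (B i).subtype (· ∈ X)
  have hA {i} (hi : i ∈ I) : (A' i).map e = A i :=
    subtype_map_of_mem fun x hx => mem_biUnion.2 ⟨i, hi, mem_union_left _ hx⟩
  have hB {i} (hi : i ∈ I) : (B' i).map e = B i :=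
    subtype_map_of_mem fun x hx => mem_biUnion.2 ⟨i, hi, mem_union_right _ hx⟩
  have hinter {i j} (hi : i ∈ I) (hj : j ∈ I) : (A' i ∩ B' j).map e = A i ∩ B j := by
    rw [map_inter, hA hi, hB hj]
  have hinj {i j k l} (hi : i ∈ I) (hj : j ∈ I) (hk : k ∈ I) (hl : l ∈ I) :
      A' i ∩ B' j = A' k ∩ B' l ↔ A i ∩ B j = A k ∩ B l := by
    rw [← map_inj (f := e), hinter hi hj, hinter hk hl]
  refine le_of_eq_of_le (sum_congr rfl fun i hi => ?_) (sum_inv_choose_mul_inv_choose_le_one ht I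
    A' B' (fun i hi => ?_) (fun i hi j hj hij => ?_) fun i hi j hj hij => ?_)
  · rw [← card_map e (s := A' i ∪ B' i), ← card_map e (s := A' i \ B' i), ← card_map e (s := B' i),
      ← card_map e (s := A' i ∩ B' i), map_union, Finset.map_sdiff, map_inter, hA hi, hB hi]
  · rw [← card_map e, hinter hi hi]
    exact ha i hi
  · rw [← card_map e, hinter hi hj]
    exact hb i hi j hj hij
  · rw [hinj hi hi hj hj, hinj hi hj hi hi, hinj hi hi hj hi]
    exact hc' i hi j hj hij
end

section
/- Let $[n]$ be a finite ground set and let $(A_1, B_1), \dots, (A_k, B_k)$ be pairs of subsets of $[n]$ satisfying, for some $t \ge 1$: (a) $|A_i \cap B_i| \le t$; (b) $|A_i \cap B_j| \ge t$ for $i \ne j$; (c') if $A_i \cap B_i = A_j \cap B_j$ for $i \ne j$, then not all of $A_i \cap B_j$, $A_i \cap B_i$, $A_j \cap B_i$ are equal. Then no permutation $\sigma$ of $[n]$ properly separates two distinct pairs $(A_i, B_i)$ and $(A_j, B_j)$. -/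
/-- A permutation `σ` of `[n]` (where `x_s = σ s`) properly separates the pair `(A, B)`. -/
def ProperlySeparates {n : ℕ} (σ : Equiv.Perm (Fin n)) (A B : Finset (Fin n)) : Prop :=
  (∀ s l : Fin n, σ s ∈ A \ B → σ l ∈ B → s < l) ∧
  (∀ s l : Fin n, σ s ∈ A → σ l ∈ B \ A → s < l)

theorem stmt_9 (n k t : ℕ) (ht : 1 ≤ t)
    (A B : Fin k → Finset (Fin n))
    (ha : ∀ i, (A i ∩ B i).card ≤ t)
    (hb : ∀ i j, i ≠ j → t ≤ (A i ∩ B j).card)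
    (hc' : ∀ i j, i ≠ j → A i ∩ B i = A j ∩ B j →
      ¬(A i ∩ B j = A i ∩ B i ∧ A i ∩ B i = A j ∩ B i)) :
    ∀ σ : Equiv.Perm (Fin n), ∀ i j, i ≠ j →
      ¬(ProperlySeparates σ (A i) (B i) ∧ ProperlySeparates σ (A j) (B j)) := by
  rintro σ i j hij ⟨hsi, hsj⟩
  classical
  set p : Fin n → Fin n := fun x => σ.symm x with hp
  have key : ∀ (S T : Finset (Fin n)), ProperlySeparates σ S T →
      (∀ x ∈ S \ T, ∀ y ∈ T, p x < p y) ∧ (∀ x ∈ S, ∀ y ∈ T \ S, p x < p y) := by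
    rintro S T ⟨h1, h2⟩
    refine ⟨fun x hx y hy => ?_, fun x hx y hy => ?_⟩
    · exact h1 (p x) (p y) (by simpa [hp] using hx) (by simpa [hp] using hy)
    · exact h2 (p x) (p y) (by simpa [hp] using hx) (by simpa [hp] using hy)
  obtain ⟨Hi1, Hi2⟩ := key (A i) (B i) hsi
  obtain ⟨Hj1, Hj2⟩ := key (A j) (B j) hsj
  have hPne : (A i ∩ B j).Nonempty :=
    Finset.card_pos.mp (lt_of_lt_of_le ht (hb i j hij))
  have hQne : (A j ∩ B i).Nonempty :=
    Finset.card_pos.mp (lt_of_lt_of_le ht (hb j i hij.symm))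
  -- F2 : x ∈ P with x ∉ A j, and c ∈ Q with c ∉ A i, is impossible
  have hF2 : ∀ x ∈ A i ∩ B j, x ∉ A j → ∀ c ∈ A j ∩ B i, c ∉ A i → False := by
    intro x hx hxAj c hc hcAi
    rw [Finset.mem_inter] at hx hc
    have h1 := Hj2 c hc.1 x (Finset.mem_sdiff.mpr ⟨hx.2, hxAj⟩)
    have h2 := Hi2 x hx.1 c (Finset.mem_sdiff.mpr ⟨hc.2, hcAi⟩)
    exact absurd h1 (not_lt.mpr h2.le)
  -- F3 : z ∈ P with z ∉ B i, and b ∈ Q with b ∉ B j, is impossible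
  have hF3 : ∀ z ∈ A i ∩ B j, z ∉ B i → ∀ b ∈ A j ∩ B i, b ∉ B j → False := by
    intro z hz hzBi b hbm hbBj
    rw [Finset.mem_inter] at hz hbm
    have h1 := Hi1 z (Finset.mem_sdiff.mpr ⟨hz.1, hzBi⟩) b hbm.2
    have h2 := Hj1 b (Finset.mem_sdiff.mpr ⟨hbm.1, hbBj⟩) z hz.2
    exact absurd h1 (not_lt.mpr h2.le)
  -- F1 : every element of P lies in M_i ∪ M_j
  have hPsub : A i ∩ B j ⊆ (A i ∩ B i) ∪ (A j ∩ B j) := by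
    intro a ha'
    have haa := Finset.mem_inter.mp ha'
    by_cases hBi : a ∈ B i
    · exact Finset.mem_union_left _ (Finset.mem_inter.mpr ⟨haa.1, hBi⟩)
    by_cases hAj : a ∈ A j
    · exact Finset.mem_union_right _ (Finset.mem_inter.mpr ⟨hAj, haa.2⟩)
    exfalso
    obtain ⟨b, hb'⟩ := hQne
    have hbb := Finset.mem_inter.mp hb'
    have h1 := Hi1 a (Finset.mem_sdiff.mpr ⟨haa.1, hBi⟩) b hbb.2
    have h2 := Hj2 b hbb.1 a (Finset.mem_sdiff.mpr ⟨haa.2, hAj⟩)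
    exact absurd h1 (not_lt.mpr h2.le)
  have hcard : ∀ (S T : Finset (Fin n)), S ⊆ T → T.card ≤ t → t ≤ S.card → S = T :=
    fun S T hsub h1 h2 => Finset.eq_of_subset_of_card_le hsub (le_trans h1 h2)
  by_cases hx : ∃ x ∈ A i ∩ B j, x ∉ A j
  · obtain ⟨x, hxP, hxAj⟩ := hx
    -- from F2: Q ⊆ A i, hence Q ⊆ M_i
    have hQMi : A j ∩ B i ⊆ A i ∩ B i := by
      intro c hc
      have hcc := Finset.mem_inter.mp hc
      by_cases hcAi : c ∈ A i
      · exact Finset.mem_inter.mpr ⟨hcAi, hcc.2⟩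
      · exact absurd (hF2 x hxP hxAj c hc hcAi) (not_false)
    have hQeq : A j ∩ B i = A i ∩ B i := hcard _ _ hQMi (ha i) (hb j i hij.symm)
    by_cases hz : ∃ z ∈ A i ∩ B j, z ∉ B i
    · obtain ⟨z, hzP, hzBi⟩ := hz
      -- from F3: Q ⊆ B j, hence Q ⊆ M_j as well, so M_i = M_j ∋ x : contradiction
      have hQMj : A j ∩ B i ⊆ A j ∩ B j := by
        intro b hbm
        have hbb := Finset.mem_inter.mp hbm
        by_cases hbBj : b ∈ B j
        · exact Finset.mem_inter.mpr ⟨hbb.1, hbBj⟩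
        · exact absurd (hF3 z hzP hzBi b hbm hbBj) (not_false)
      have hQeq2 : A j ∩ B i = A j ∩ B j := hcard _ _ hQMj (ha j) (hb j i hij.symm)
      have hMM : A i ∩ B i = A j ∩ B j := hQeq ▸ hQeq2
      have hxU := hPsub hxP
      rcases Finset.mem_union.mp hxU with h | h
      · exact hxAj (Finset.mem_inter.mp (hMM ▸ h)).1
      · exact hxAj (Finset.mem_inter.mp h).1
    · -- P ⊆ B i, so P ⊆ M_i ; then P = M_i = Q, but x ∈ P means x ∈ A j via Q
      push_neg at hz
      have hPMi : A i ∩ B j ⊆ A i ∩ B i := fun a ha' =>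
        Finset.mem_inter.mpr ⟨(Finset.mem_inter.mp ha').1, hz a ha'⟩
      have hPeq : A i ∩ B j = A i ∩ B i := hcard _ _ hPMi (ha i) (hb i j hij)
      have : x ∈ A j ∩ B i := by rw [hQeq, ← hPeq]; exact hxP
      exact hxAj (Finset.mem_inter.mp this).1
  · push_neg at hx
    -- P ⊆ A j, so P ⊆ M_j
    have hPMj : A i ∩ B j ⊆ A j ∩ B j := fun a ha' =>
      Finset.mem_inter.mpr ⟨hx a ha', (Finset.mem_inter.mp ha').2⟩
    have hPeqMj : A i ∩ B j = A j ∩ B j := hcard _ _ hPMj (ha j) (hb i j hij)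
    by_cases hz : ∃ z ∈ A i ∩ B j, z ∉ B i
    · obtain ⟨z, hzP, hzBi⟩ := hz
      -- from F3: Q ⊆ B j, so Q ⊆ M_j, Q = M_j = P ∋ z, so z ∈ B i : contradiction
      have hQMj : A j ∩ B i ⊆ A j ∩ B j := by
        intro b hbm
        have hbb := Finset.mem_inter.mp hbm
        by_cases hbBj : b ∈ B j
        · exact Finset.mem_inter.mpr ⟨hbb.1, hbBj⟩
        · exact absurd (hF3 z hzP hzBi b hbm hbBj) (not_false)
      have hQeq : A j ∩ B i = A j ∩ B j := hcard _ _ hQMj (ha j) (hb j i hij.symm)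
      have : z ∈ A j ∩ B i := by rw [hQeq, ← hPeqMj]; exact hzP
      exact hzBi (Finset.mem_inter.mp this).2
    · -- P ⊆ B i too, so P ⊆ M_i, P = M_i = M_j, Q ⊆ M_i, Q = M_i, contradict hc'
      push_neg at hz
      have hPMi : A i ∩ B j ⊆ A i ∩ B i := fun a ha' =>
        Finset.mem_inter.mpr ⟨(Finset.mem_inter.mp ha').1, hz a ha'⟩
      have hPeqMi : A i ∩ B j = A i ∩ B i := hcard _ _ hPMi (ha i) (hb i j hij)
      have hMM : A i ∩ B i = A j ∩ B j := by rw [← hPeqMi, hPeqMj]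
      have hQsub : A j ∩ B i ⊆ (A i ∩ B i) ∪ (A j ∩ B j) := by
        intro a ha'
        have haa := Finset.mem_inter.mp ha'
        by_cases hBj : a ∈ B j
        · exact Finset.mem_union_right _ (Finset.mem_inter.mpr ⟨haa.1, hBj⟩)
        by_cases hAi : a ∈ A i
        · exact Finset.mem_union_left _ (Finset.mem_inter.mpr ⟨hAi, haa.2⟩)
        exfalso
        obtain ⟨b, hb'⟩ := hPne
        have hbb := Finset.mem_inter.mp hb'
        have h1 := Hj1 a (Finset.mem_sdiff.mpr ⟨haa.1, hBj⟩) b hbb.2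
        have h2 := Hi2 b hbb.1 a (Finset.mem_sdiff.mpr ⟨haa.2, hAi⟩)
        exact absurd h1 (not_lt.mpr h2.le)
      have hQMi : A j ∩ B i ⊆ A i ∩ B i := by
        intro c hc
        rcases Finset.mem_union.mp (hQsub hc) with h | h
        · exact h
        · exact hMM ▸ h
      have hQeq : A j ∩ B i = A i ∩ B i := hcard _ _ hQMi (ha i) (hb j i hij.symm)
      exact hc' i j hij hMM ⟨hPeqMi, hQeq.symm⟩
end

section
/- Let $A, B$ be subsets of $[n]$. If a uniformly random permutation $\sigma$ of $[n]$ is chosen, the probability that $\sigma$ properly separates the pair $(A, B)$ equals $\binom{|A \cup B|}{|A \setminus B|}^{-1} \binom{|B|}{|A \cap B|}^{-1}$. -/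
/-!
Label the elements of `A \ B`, `A ∩ B`, `B \ A` by `0 < 1 < 2` and all others by `⊥`. Then `σ`
properly separates `(A, B)` iff, reading the labels `ℓ ∘ σ` along the positions, the labelled
positions carry their labels in increasing order. The map `σ ↦ ℓ ∘ σ` has fibres of size
`|Stab ℓ| = r! a! c! b!`, where `a, c, b` are the sizes of the three blocks and `r = n - m` with
`m = |A ∪ B|`. An ordered rearrangement of `ℓ` is determined by its set of labelled positions, and
sorting the labels in place shows that every `m`-set of positions occurs; so ordered
rearrangements of `ℓ` are as many as rearrangements of the indicator of `A ∪ B`, whose fibres have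
size `m! r!`. Comparing the two counts gives `#S · m! = n! · a! c! b!`.
-/

open Finset Equiv Nat

lemma exists_perm_monotoneOn_comp {α γ : Type*} [LinearOrder α] [Fintype α] [LinearOrder γ]
    (f : α → γ) (Q : Finset α) :
    ∃ π : Perm α, (∀ s, π s ∈ Q ↔ s ∈ Q) ∧ MonotoneOn (f ∘ π) Q := by
  let e : Fin #Q ≃o Q := Q.orderIsoOfFin rfl
  let π₀ : Perm (Fin #Q) := Tuple.sort fun i => f (e i)
  refine ⟨Perm.ofSubtype (e.toEquiv.permCongr π₀), fun s => ?_, fun s hs t ht hst => ?_⟩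
  · by_cases hs : s ∈ Q
    · simp [Perm.ofSubtype_apply_of_mem _ hs, hs]
    · rw [Perm.ofSubtype_apply_of_not_mem _ hs]
  · simp only [Function.comp_apply, Perm.ofSubtype_apply_of_mem _ hs,
      Perm.ofSubtype_apply_of_mem _ ht, permCongr_apply]
    exact Tuple.monotone_sort (fun i => f (e i)) (e.symm.monotone (Subtype.mk_le_mk.2 hst))

lemma Finset.eq_of_card_eq_of_forall_lt {α : Type*} [LinearOrder α] {X Y Q : Finset α}
    (hXQ : X ⊆ Q) (hYQ : Y ⊆ Q) (hX : ∀ x ∈ X, ∀ y ∈ Q \ X, x < y)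
    (hY : ∀ x ∈ Y, ∀ y ∈ Q \ Y, x < y) (hcard : #X = #Y) : X = Y := by
  refine eq_of_subset_of_card_le (fun x hx => ?_) hcard.ge
  by_contra hxY
  have hYX : Y ⊆ X := fun y hy => by
    by_contra hyX
    exact lt_asymm (hX x hx y (mem_sdiff.2 ⟨hYQ hy, hyX⟩)) (hY y hy x (mem_sdiff.2 ⟨hXQ hx, hxY⟩))
  exact hxY (eq_of_subset_of_card_le hYX hcard.le ▸ hx)

section Rearrangements

variable {α β : Type*} [Fintype α] [DecidableEq α] [DecidableEq β]

def rearrangements (f : α → β) : Finset (α → β) :=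
  univ.image fun σ : Perm α => f ∘ σ

lemma mem_rearrangements {f p : α → β} : p ∈ rearrangements f ↔ ∃ σ : Perm α, f ∘ σ = p := by
  simp [rearrangements]

lemma card_comp_perm_eq_stabilizer (f : α → β) (σ₀ : Perm α) :
    Fintype.card {σ : Perm α // f ∘ σ = f ∘ σ₀} = Fintype.card {g : Perm α // f ∘ g = f} := by
  refine Fintype.card_congr (Equiv.subtypeEquiv (Equiv.mulRight σ₀⁻¹) fun σ => ?_)
  constructor
  · intro h
    ext x
    simpa using congrFun h (σ₀⁻¹ x)
  · intro h
    ext x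
    simpa using congrFun h (σ₀ x)

lemma card_filter_comp_perm (f : α → β) (P : (α → β) → Prop) [DecidablePred P] :
    #{σ : Perm α | P (f ∘ σ)} =
      #{p ∈ rearrangements f | P p} * Fintype.card {g : Perm α // f ∘ g = f} := by
  rw [card_eq_sum_card_image (fun σ : Perm α => f ∘ σ), rearrangements, filter_image]
  refine sum_const_nat fun p hp => ?_
  obtain ⟨σ₀, hσ₀, rfl⟩ := mem_image.1 hp
  rw [← card_comp_perm_eq_stabilizer f σ₀, Fintype.card_subtype, filter_filter]
  congr 1
  ext σ
  simp only [mem_filter, mem_univ, true_and, and_iff_right_iff_imp] at hσ₀ ⊢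
  exact fun h => h ▸ hσ₀

lemma card_filter_comp_eq_of_mem_rearrangements {f p : α → β} (hp : p ∈ rearrangements f)
    (P : β → Prop) [DecidablePred P] : #{a | P (p a)} = #{a | P (f a)} := by
  obtain ⟨σ, rfl⟩ := mem_rearrangements.1 hp
  exact card_equiv σ (by simp)

end Rearrangements

section BlocksInOrder

variable {α ι : Type*} [LinearOrder α] [Fintype α] [LinearOrder ι]

def BlocksInOrder (p : α → WithBot ι) : Prop :=
  ∀ ⦃s l⦄, ⊥ < p s → p s < p l → s < l

lemma BlocksInOrder.eq_of_card_eq {p p' : α → WithBot ι} (hp : BlocksInOrder p)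
    (hp' : BlocksInOrder p') (hsupp : ∀ s, p s = ⊥ ↔ p' s = ⊥)
    (hcard : ∀ i : ι, #{s | ⊥ < p s ∧ p s ≤ i} = #{s | ⊥ < p' s ∧ p' s ≤ i}) : p = p' := by
  have hsupp' (s : α) : ⊥ < p s ↔ ⊥ < p' s := by
    simpa only [bot_lt_iff_ne_bot] using not_congr (hsupp s)
  have layer (i : ι) :
      univ.filter (fun s => ⊥ < p s ∧ p s ≤ i) = univ.filter (fun s => ⊥ < p' s ∧ p' s ≤ i) := by
    refine eq_of_card_eq_of_forall_lt (Q := {s | ⊥ < p s}) ?_ ?_ ?_ ?_ (hcard i)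
    · intro s; simp only [mem_filter, mem_univ, true_and]; exact And.left
    · intro s; simp only [mem_filter, mem_univ, true_and, hsupp']; exact And.left
    · simp only [mem_sdiff, mem_filter, mem_univ, true_and, not_and, not_le]
      exact fun x hx y hy => hp hx.1 (hx.2.trans_lt (hy.2 hy.1))
    · simp only [mem_sdiff, mem_filter, mem_univ, true_and, not_and, not_le, hsupp']
      exact fun x hx y hy => hp' hx.1 (hx.2.trans_lt (hy.2 hy.1))
  have le_iff (s : α) (i : ι) (hs : ⊥ < p s) : p s ≤ i ↔ p' s ≤ i := by
    simpa [hs, (hsupp' s).1 hs] using congrArg (s ∈ ·) (layer i)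
  funext s
  induction hps : p s using WithBot.recBotCoe with
  | bot => exact ((hsupp s).1 hps).symm
  | coe i =>
    have hs : ⊥ < p s := hps ▸ WithBot.bot_lt_coe i
    obtain ⟨j, hj⟩ := WithBot.ne_bot_iff_exists.1 ((hsupp' s).1 hs).ne'
    have hji : j ≤ i := by simpa [hps, ← hj] using le_iff s i hs
    have hij : i ≤ j := by simpa [hps, ← hj] using (le_iff s j hs).2 hj.symm.le
    rw [← hj, le_antisymm hij hji]

instance : DecidablePred (BlocksInOrder : (α → WithBot ι) → Prop) :=
  fun _ => Fintype.decidableForallFintype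

lemma card_rearrangements_filter_blocksInOrder [DecidableEq ι] (ℓ : α → WithBot ι) :
    #{p ∈ rearrangements ℓ | BlocksInOrder p} = #(rearrangements fun x => decide (ℓ x ≠ ⊥)) := by
  refine card_bij (fun p _ x => decide (p x ≠ ⊥)) ?_ ?_ ?_
  · intro p hp
    obtain ⟨σ, rfl⟩ := mem_rearrangements.1 (mem_filter.1 hp).1
    exact mem_rearrangements.2 ⟨σ, rfl⟩
  · intro p₁ hp₁ p₂ hp₂ h
    rw [mem_filter] at hp₁ hp₂
    refine hp₁.2.eq_of_card_eq hp₂.2 (fun s => by simpa using congrFun h s) fun i => ?_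
    rw [card_filter_comp_eq_of_mem_rearrangements hp₁.1 (fun y => ⊥ < y ∧ y ≤ i),
      card_filter_comp_eq_of_mem_rearrangements hp₂.1 (fun y => ⊥ < y ∧ y ≤ i)]
  · intro q hq
    obtain ⟨σ, rfl⟩ := mem_rearrangements.1 hq
    obtain ⟨π, hπQ, hmono⟩ := exists_perm_monotoneOn_comp (ℓ ∘ σ) {s | ℓ (σ s) ≠ ⊥}
    simp only [mem_filter, mem_univ, true_and] at hπQ hmono
    refine ⟨ℓ ∘ ⇑(σ * π), mem_filter.2 ⟨mem_rearrangements.2 ⟨_, rfl⟩, ?_⟩, ?_⟩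
    · intro s l hs hsl
      refine lt_of_not_ge fun hls => (hmono ?_ ?_ hls).not_gt hsl
      · simpa using (hπQ l).1 (hs.trans hsl).ne'
      · simpa using (hπQ s).1 hs.ne'
    · funext s
      exact decide_eq_decide.2 (hπQ s)

theorem card_blocksInOrder_mul_factorial [Fintype ι] [DecidableEq ι] (ℓ : α → WithBot ι) :
    Nat.card {σ : Perm α // BlocksInOrder (ℓ ∘ σ)} * (Fintype.card {x // ℓ x ≠ ⊥})! =
      (Fintype.card α)! * ∏ i : ι, (Fintype.card {x // ℓ x = i})! := by
  have hS := card_filter_comp_perm ℓ BlocksInOrder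
  have hall := card_filter_comp_perm (fun x => decide (ℓ x ≠ ⊥)) fun _ => True
  rw [card_rearrangements_filter_blocksInOrder] at hS
  rw [DomMulAct.stabilizer_card,
    show ∏ y : WithBot ι, (Fintype.card {x // ℓ x = y})! =
      (Fintype.card {x // ℓ x = ⊥})! * ∏ i : ι, (Fintype.card {x // ℓ x = i})!
    from Fintype.prod_option _] at hS
  rw [DomMulAct.stabilizer_card, Fintype.prod_bool, filter_true, filter_true, Finset.card_univ,
    Fintype.card_perm] at hall
  have htrue : Fintype.card {x // decide (ℓ x ≠ ⊥) = true} = Fintype.card {x // ℓ x ≠ ⊥} :=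
    Fintype.card_congr (Equiv.subtypeEquivRight fun x => by simp)
  have hfalse : Fintype.card {x // decide (ℓ x ≠ ⊥) = false} = Fintype.card {x // ℓ x = ⊥} :=
    Fintype.card_congr (Equiv.subtypeEquivRight fun x => by simp)
  rw [htrue, hfalse] at hall
  rw [Nat.card_eq_fintype_card, Fintype.card_subtype, hS, hall]
  ring

end BlocksInOrder

def separationLabel {α : Type*} [DecidableEq α] (A B : Finset α) (x : α) : WithBot (Fin 3) :=
  if x ∈ A then ((if x ∈ B then 1 else 0 : Fin 3) : WithBot (Fin 3))
  else if x ∈ B then ((2 : Fin 3) : WithBot (Fin 3)) else ⊥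

lemma properlySeparates_iff_blocksInOrder {n : ℕ} (σ : Perm (Fin n)) (A B : Finset (Fin n)) :
    ProperlySeparates σ A B ↔ BlocksInOrder (separationLabel A B ∘ σ) := by
  simp only [ProperlySeparates, BlocksInOrder, separationLabel, Function.comp_apply, mem_sdiff]
  constructor
  · rintro ⟨h₁, h₂⟩ s l hs hsl
    split_ifs at hs hsl <;> simp_all +decide [h₁ s l, h₂ s l]
  · intro h
    refine ⟨fun s l hs hl => h ?_ ?_, fun s l hs hl => h ?_ ?_⟩ <;> split_ifs <;> simp_all +decide

section SeparationLabel

variable {α : Type*} [Fintype α] [DecidableEq α] (A B : Finset α)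

lemma card_separationLabel_ne_bot : Fintype.card {x // separationLabel A B x ≠ ⊥} = #(A ∪ B) :=
  Fintype.card_of_subtype _ fun x => by
    by_cases hA : x ∈ A <;> by_cases hB : x ∈ B <;> simp [separationLabel, hA, hB]

lemma card_separationLabel_eq (i : Fin 3) :
    Fintype.card {x // separationLabel A B x = i} = #(![A \ B, A ∩ B, B \ A] i) :=
  Fintype.card_of_subtype _ fun x => by
    fin_cases i <;> by_cases hA : x ∈ A <;> by_cases hB : x ∈ B <;>
      simp +decide [separationLabel, hA, hB]

end SeparationLabel

lemma Nat.choose_mul_choose_mul_factorial_mul_factorial_mul_factorial (a b c : ℕ) :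
    (a + b + c).choose a * (b + c).choose b * (a ! * b ! * c !) = (a + b + c)! := by
  have h₁ := Nat.add_choose_mul_factorial_mul_factorial (b + c) a
  have h₂ := Nat.add_choose_mul_factorial_mul_factorial c b
  rw [add_comm c b] at h₂
  rw [show a + b + c = b + c + a by ring, ← h₁, ← h₂]
  ring

lemma card_properlySeparates_mul_factorial (n : ℕ) (A B : Finset (Fin n)) :
    Nat.card {σ : Perm (Fin n) // ProperlySeparates σ A B} * (#(A ∪ B))! =
      n ! * ((#(A \ B))! * (#(A ∩ B))! * (#(B \ A))!) := by
  simpa only [← properlySeparates_iff_blocksInOrder, card_separationLabel_ne_bot,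
    card_separationLabel_eq, Fin.prod_univ_three, Fintype.card_fin, Matrix.cons_val_zero,
    Matrix.cons_val_one, Matrix.cons_val_two, Matrix.head_cons, Matrix.tail_cons]
    using card_blocksInOrder_mul_factorial (separationLabel A B)

theorem stmt_10 (n : ℕ) (A B : Finset (Fin n)) :
    ((Nat.card {σ : Equiv.Perm (Fin n) // ProperlySeparates σ A B} : ℝ)) /
      (Nat.factorial n : ℝ) =
    ((((A ∪ B).card.choose ((A \ B).card) : ℕ) : ℝ))⁻¹ *
      (((B.card.choose ((A ∩ B).card) : ℕ) : ℝ))⁻¹ := by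
  have hcount := card_properlySeparates_mul_factorial n A B
  have hU : #(A ∪ B) = #(A \ B) + #(A ∩ B) + #(B \ A) := by
    rw [card_sdiff_add_card_inter, add_comm, card_sdiff_add_card, union_comm]
  have hB : #B = #(A ∩ B) + #(B \ A) := by
    rw [← card_inter_add_card_sdiff B A, inter_comm]
  rw [hU] at hcount ⊢
  rw [hB]
  set a := #(A \ B)
  set c := #(A ∩ B)
  set b := #(B \ A)
  have key : Nat.card {σ : Perm (Fin n) // ProperlySeparates σ A B} *
      ((a + c + b).choose a * (c + b).choose c) = n ! := by
    refine Nat.eq_of_mul_eq_mul_right (by positivity : 0 < a ! * c ! * b !) ?_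
    rw [mul_assoc, Nat.choose_mul_choose_mul_factorial_mul_factorial_mul_factorial, hcount]
  have h₁ : ((a + c + b).choose a : ℝ) ≠ 0 := by exact_mod_cast (Nat.choose_pos (by omega)).ne'
  have h₂ : ((c + b).choose c : ℝ) ≠ 0 := by exact_mod_cast (Nat.choose_pos (by omega)).ne'
  rw [div_eq_iff (by positivity), ← key]
  push_cast
  field_simp
end

section
/- Let $1 \le t \le k_1 \le \cdots \le k_r \le n$ and suppose $n$ is sufficiently large in terms of $k_{r-1}, k_r, t$. Let $\mathcal{F}_1, \dots, \mathcal{F}_r$ be families of subsets of $[n]$ with each member of $\mathcal{F}_i$ having size at most $k_i$, such that $|A \cap B| \ge t$ for all $A \in \mathcal{F}_i$, $B \in \mathcal{F}_j$ with $i \ne j$. Then $\prod_{i=1}^r |\mathcal{F}_i| \le \prod_{i=1}^r \left( \sum_{j=0}^{k_i - t} \binom{n-t}{k_i - t - j} \right)$. -/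
/-!
If every `F i` has at most `m i` members, where `m i` counts the sets of size at most `kk i`
through a fixed `t`-set, we are done. Otherwise some `F p` is too large to be such a `t`-star, so
no `t`-set lies in all its members. Let `K` be the largest `kk i`. Every member of another family
`F j` then contains one of at most `C(K, t) * C(2K, t + 1)` sets of size `t + 1`: a `t`-subset `S`
of a fixed `A₁ ∈ F p` plus a point of some member of `F p` missing `S`. Hence
`|F j| = O(n ^ (kk j - t - 1))`, which for large `n` is smaller than `m j` by more than the factor
`C(K, t)`; and `|F p| ≤ C(K, t) * m p`, since each member of `F p` contains a `t`-subset of a fixed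
member of another family. Moving the factor `C(K, t)` from `F p` to one other family gives the
bound.
-/

open Finset

theorem Nat.choose_le_choose_of_le_of_le_half {n r s : ℕ} (hrs : r ≤ s) (hs : s ≤ n / 2) :
    n.choose r ≤ n.choose s := by
  induction s, hrs using Nat.le_induction with
  | base => rfl
  | succ s _ ih => exact (ih (by omega)).trans (Nat.choose_le_succ_of_lt_half_left (by omega))

/-- Sums of lower binomial coefficients are negligible: the terms increase up to `u`, and
`N * (N - 1).choose (u - 1) = u * N.choose u`. -/
theorem mul_sum_choose_le_choose {E N u : ℕ} (hu : 2 * u ≤ N) (hE : E * u ^ 2 ≤ N) :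
    E * ∑ s ∈ range u, (N - 1).choose s ≤ N.choose u := by
  rcases u with _ | u
  · simp
  obtain ⟨M, rfl⟩ : ∃ M, N = M + 1 := ⟨N - 1, by omega⟩
  rw [Nat.add_sub_cancel]
  have hsum : ∑ s ∈ range (u + 1), M.choose s ≤ (u + 1) * M.choose u := by
    simpa using sum_le_card_nsmul (range (u + 1)) _ _ fun s hs =>
      Nat.choose_le_choose_of_le_of_le_half (Nat.lt_succ_iff.1 (mem_range.1 hs)) (by omega)
  refine Nat.le_of_mul_le_mul_left ?_ u.succ_pos
  calc (u + 1) * (E * ∑ s ∈ range (u + 1), M.choose s)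
      ≤ (u + 1) * (E * ((u + 1) * M.choose u)) := by gcongr
    _ = E * (u + 1) ^ 2 * M.choose u := by ring
    _ ≤ (M + 1) * M.choose u := Nat.mul_le_mul_right _ hE
    _ = (u + 1) * (M + 1).choose (u + 1) := by rw [Nat.add_one_mul_choose_eq, mul_comm]

theorem sum_range_choose_sub_eq (N : ℕ) {t k : ℕ} (htk : t ≤ k) :
    ∑ j ∈ range (k - t + 1), N.choose (k - t - j) = ∑ s ∈ range (k + 1 - t), N.choose s := by
  rw [show k + 1 - t = k - t + 1 by omega]
  simpa using sum_range_reflect N.choose (k - t + 1)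

-- What `mul_sum_choose_le_choose` needs for `N = n - t`, `E = C(K, t) ^ 2 * C(2K, t + 1)`, `u ≤ K`.
def crossProductThreshold (K t : ℕ) : ℕ :=
  K.choose t ^ 2 * (2 * K).choose (t + 1) * K ^ 2 + 2 * K + t

section

variable {α : Type*} [DecidableEq α]

theorem exists_mem_inter_notMem_of_not_subset {A B S : Finset α} (hS : #S ≤ #(B ∩ A))
    (hSA : ¬S ⊆ A) : ∃ x ∈ B ∩ A, x ∉ S := by
  by_contra! h
  have hlt : #(S ∩ A) < #S :=
    card_lt_card (inter_subset_left.ssubset_of_ne (mt inter_eq_left.1 hSA))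
  have hle : #(B ∩ A) ≤ #(S ∩ A) :=
    card_le_card fun x hx => mem_inter.2 ⟨h x hx, (mem_inter.1 hx).2⟩
  omega

variable [Fintype α]

def boundedSupersets (T : Finset α) (k : ℕ) : Finset (Finset α) := {A | T ⊆ A ∧ #A ≤ k}

theorem card_boundedSupersets_le (T : Finset α) (k : ℕ) :
    #(boundedSupersets T k) ≤ ∑ s ∈ range (k + 1 - #T), (Fintype.card α - #T).choose s := by
  have hsub : boundedSupersets T k ⊆
      (range (k + 1 - #T)).biUnion fun s => (Tᶜ.powersetCard s).image (· ∪ T) := by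
    intro A hA
    obtain ⟨hTA, hAk⟩ := (mem_filter.1 hA).2
    have hcard : #(A \ T) = #A - #T := card_sdiff_of_subset hTA
    refine mem_biUnion.2 ⟨#(A \ T), ?_, mem_image.2 ⟨A \ T, ?_, sdiff_union_of_subset hTA⟩⟩
    · have := card_le_card hTA
      rw [mem_range, hcard]
      omega
    · exact mem_powersetCard.2 ⟨fun x hx => mem_compl.2 (mem_sdiff.1 hx).2, rfl⟩
  calc #(boundedSupersets T k) ≤ _ := card_le_card hsub
    _ ≤ ∑ s ∈ range (k + 1 - #T), #((Tᶜ.powersetCard s).image (· ∪ T)) := card_biUnion_le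
    _ ≤ _ := sum_le_sum fun s _ => card_image_le.trans (by rw [card_powersetCard, card_compl])

theorem card_le_card_mul_of_forall_exists_subset {F 𝒯 : Finset (Finset α)} {k t : ℕ}
    (hF : ∀ A ∈ F, #A ≤ k) (h𝒯 : ∀ T ∈ 𝒯, #T = t) (hcover : ∀ A ∈ F, ∃ T ∈ 𝒯, T ⊆ A) :
    #F ≤ #𝒯 * ∑ s ∈ range (k + 1 - t), (Fintype.card α - t).choose s := by
  calc #F ≤ #(𝒯.biUnion (boundedSupersets · k)) := card_le_card fun A hA => by
        obtain ⟨T, hT, hTA⟩ := hcover A hA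
        exact mem_biUnion.2 ⟨T, hT, mem_filter.2 ⟨mem_univ _, hTA, hF A hA⟩⟩
    _ ≤ _ := card_biUnion_le_card_mul _ _ _ fun T hT =>
      h𝒯 T hT ▸ card_boundedSupersets_le T k

theorem card_le_of_forall_subset {F : Finset (Finset α)} {S : Finset α} {k : ℕ}
    (hF : ∀ A ∈ F, #A ≤ k) (hS : ∀ A ∈ F, S ⊆ A) :
    #F ≤ ∑ s ∈ range (k + 1 - #S), (Fintype.card α - #S).choose s := by
  simpa using card_le_card_mul_of_forall_exists_subset hF (fun T hT => congrArg card
    (mem_singleton.1 hT)) fun A hA => ⟨S, mem_singleton_self S, hS A hA⟩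

theorem card_le_choose_mul_of_forall_le_card_inter {F : Finset (Finset α)} {B : Finset α}
    {k t : ℕ} (hF : ∀ A ∈ F, #A ≤ k) (hB : ∀ A ∈ F, t ≤ #(A ∩ B)) :
    #F ≤ (#B).choose t * ∑ s ∈ range (k + 1 - t), (Fintype.card α - t).choose s := by
  rw [← card_powersetCard]
  refine card_le_card_mul_of_forall_exists_subset hF (fun T hT => (mem_powersetCard.1 hT).2)
    fun A hA => ?_
  obtain ⟨S, hS, hSt⟩ := exists_subset_card_eq (hB A hA)
  exact ⟨S, mem_powersetCard.2 ⟨hS.trans inter_subset_right, hSt⟩, hS.trans inter_subset_left⟩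

theorem card_le_of_forall_le_card_inter_of_not_star {F G : Finset (Finset α)} {A₁ : Finset α}
    {k t K : ℕ} (hA₁ : A₁ ∈ G) (hG : ∀ A ∈ G, #A ≤ K)
    (hGstar : ∀ S : Finset α, #S = t → ∃ A ∈ G, ¬S ⊆ A)
    (hF : ∀ B ∈ F, #B ≤ k) (hFG : ∀ B ∈ F, ∀ A ∈ G, t ≤ #(B ∩ A)) :
    #F ≤ K.choose t * (2 * K).choose (t + 1) *
      ∑ s ∈ range (k - t), (Fintype.card α - (t + 1)).choose s := by
  have hmiss : ∀ S ∈ A₁.powersetCard t, ∃ A ∈ G, ¬S ⊆ A :=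
    fun S hS => hGstar S (mem_powersetCard.1 hS).2
  choose! g hgG hgS using hmiss
  set 𝒯 := (A₁.powersetCard t).biUnion fun S => (A₁ ∪ g S).powersetCard (t + 1)
  have h𝒯 : #𝒯 ≤ K.choose t * (2 * K).choose (t + 1) := by
    refine (card_biUnion_le_card_mul _ _ _ fun S hS => ?_).trans (Nat.mul_le_mul_right _ ?_)
    · rw [card_powersetCard]
      have := hG A₁ hA₁
      have := hG _ (hgG S hS)
      exact Nat.choose_le_choose _ ((card_union_le _ _).trans (by omega))
    · rw [card_powersetCard]
      exact Nat.choose_le_choose _ (hG A₁ hA₁)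
  have hcover : ∀ B ∈ F, ∃ T ∈ 𝒯, T ⊆ B := by
    intro B hB
    obtain ⟨S, hSBA, hSt⟩ := exists_subset_card_eq (hFG B hB A₁ hA₁)
    have hS : S ∈ A₁.powersetCard t :=
      mem_powersetCard.2 ⟨hSBA.trans inter_subset_right, hSt⟩
    obtain ⟨x, hx, hxS⟩ :=
      exists_mem_inter_notMem_of_not_subset (hSt ▸ hFG B hB _ (hgG S hS)) (hgS S hS)
    refine ⟨insert x S, mem_biUnion.2 ⟨S, hS, mem_powersetCard.2 ⟨?_, ?_⟩⟩,
      insert_subset (mem_inter.1 hx).1 (hSBA.trans inter_subset_left)⟩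
    · exact insert_subset (mem_union_right _ (mem_inter.1 hx).2)
        ((hSBA.trans inter_subset_right).trans subset_union_left)
    · rw [card_insert_of_notMem hxS, hSt]
  have h𝒯card : ∀ T ∈ 𝒯, #T = t + 1 := fun T hT => by
    obtain ⟨S, -, hT⟩ := mem_biUnion.1 hT
    exact (mem_powersetCard.1 hT).2
  calc #F ≤ #𝒯 * ∑ s ∈ range (k + 1 - (t + 1)), (Fintype.card α - (t + 1)).choose s :=
        card_le_card_mul_of_forall_exists_subset hF h𝒯card hcover
    _ ≤ _ := by
      rw [Nat.add_sub_add_right]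
      exact Nat.mul_le_mul_right _ h𝒯

theorem choose_mul_card_le_of_not_star {F G : Finset (Finset α)} {A₁ : Finset α} {k t K : ℕ}
    (hA₁ : A₁ ∈ G) (hG : ∀ A ∈ G, #A ≤ K)
    (hGstar : ∀ S : Finset α, #S = t → ∃ A ∈ G, ¬S ⊆ A)
    (hF : ∀ B ∈ F, #B ≤ k) (hFG : ∀ B ∈ F, ∀ A ∈ G, t ≤ #(B ∩ A)) (htk : t ≤ k) (hkK : k ≤ K)
    (hN : crossProductThreshold K t ≤ Fintype.card α) :
    K.choose t * #F ≤ ∑ s ∈ range (k + 1 - t), (Fintype.card α - t).choose s := by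
  set N := Fintype.card α
  have hFcard := card_le_of_forall_le_card_inter_of_not_star hA₁ hG hGstar hF hFG
  rw [← Nat.sub_sub] at hFcard
  have hE := Nat.mul_le_mul_left (K.choose t ^ 2 * (2 * K).choose (t + 1))
    (Nat.pow_le_pow_left (show k - t ≤ K by omega) 2)
  unfold crossProductThreshold at hN
  calc K.choose t * #F
      ≤ K.choose t * (K.choose t * (2 * K).choose (t + 1) *
          ∑ s ∈ range (k - t), (N - t - 1).choose s) := Nat.mul_le_mul_left _ hFcard
    _ = K.choose t ^ 2 * (2 * K).choose (t + 1) *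
          ∑ s ∈ range (k - t), (N - t - 1).choose s := by ring
    _ ≤ (N - t).choose (k - t) := mul_sum_choose_le_choose (by omega) (by omega)
    _ ≤ _ := single_le_sum (f := fun s => (N - t).choose s) (fun _ _ => Nat.zero_le _)
          (mem_range.2 (by omega))

end

theorem prod_le_prod_of_le_mul_of_mul_le {ι : Type*} [Fintype ι] [DecidableEq ι]
    {a b : ι → ℕ} {c : ℕ} {p q : ι} (hqp : q ≠ p) (hp : a p ≤ c * b p)
    (hother : ∀ i ≠ p, c * a i ≤ b i) : ∏ i, a i ≤ ∏ i, b i := by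
  rcases c.eq_zero_or_pos with rfl | hc
  · rw [zero_mul, Nat.le_zero] at hp
    rw [prod_eq_zero (mem_univ p) hp]
    exact Nat.zero_le _
  have hq : q ∈ univ.erase p := mem_erase.2 ⟨hqp, mem_univ q⟩
  rw [← mul_prod_erase univ a (mem_univ p), ← mul_prod_erase _ a hq,
    ← mul_prod_erase univ b (mem_univ p), ← mul_prod_erase _ b hq, ← mul_assoc, ← mul_assoc]
  refine Nat.mul_le_mul (Nat.le_of_mul_le_mul_left ?_ hc) (prod_le_prod' fun i hi => ?_)
  · calc c * (a p * a q) = a p * (c * a q) := by ring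
      _ ≤ c * b p * b q := Nat.mul_le_mul hp (hother q hqp)
      _ = c * (b p * b q) := mul_assoc _ _ _
  · exact (Nat.le_mul_of_pos_left _ hc).trans
      (hother i (ne_of_mem_erase (mem_of_mem_erase hi)))

theorem stmt_15 : ∃ n0 : ℕ → ℕ → ℕ → ℕ,
    ∀ (n r : ℕ) (hr : 2 ≤ r) (t : ℕ) (kk : Fin r → ℕ),
    1 ≤ t → (∀ j, t ≤ kk j) → Monotone kk → (∀ j, kk j ≤ n) →
    n0 (kk ⟨r - 2, by omega⟩) (kk ⟨r - 1, by omega⟩) t ≤ n →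
    ∀ F : Fin r → Finset (Finset (Fin n)),
      (∀ i, ∀ A ∈ F i, A.card ≤ kk i) →
      (∀ i j, i ≠ j → ∀ A ∈ F i, ∀ B ∈ F j, t ≤ (A ∩ B).card) →
      ∏ i, (F i).card ≤
        ∏ i, ∑ j ∈ Finset.range (kk i - t + 1), (n - t).choose (kk i - t - j) := by
  classical
  refine ⟨fun _ K t => crossProductThreshold K t, ?_⟩
  intro n r hr t kk _ hkt hmono _ hn F hcard hcross
  set K := kk ⟨r - 1, by omega⟩
  have hkK : ∀ i, kk i ≤ K := fun i => hmono (Fin.le_def.2 (by simp only; omega))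
  rw [prod_congr rfl fun i _ => sum_range_choose_sub_eq (n - t) (hkt i)]
  set m : Fin r → ℕ := fun i => ∑ s ∈ range (kk i + 1 - t), (n - t).choose s
  by_cases hall : ∀ i, #(F i) ≤ m i
  · exact prod_le_prod' fun i _ => hall i
  obtain ⟨p, hp⟩ := not_forall.1 hall
  have hstar : ∀ S : Finset (Fin n), #S = t → ∃ A ∈ F p, ¬S ⊆ A := fun S hS => by
    by_contra! h
    exact hp (by simpa [hS, m] using card_le_of_forall_subset (hcard p) h)
  obtain ⟨A₁, hA₁⟩ : (F p).Nonempty := card_pos.1 (by omega)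
  have := Fin.nontrivial_iff_two_le.2 hr
  obtain ⟨q, hqp⟩ := exists_ne p
  rcases (F q).eq_empty_or_nonempty with hq | ⟨B, hB⟩
  · rw [prod_eq_zero (mem_univ q) (by rw [hq, card_empty])]
    exact Nat.zero_le _
  refine prod_le_prod_of_le_mul_of_mul_le (c := K.choose t) hqp ?_ fun j hj => ?_
  · have hFp := card_le_choose_mul_of_forall_le_card_inter (hcard p)
      fun A hA => hcross p q hqp.symm A hA B hB
    rw [Fintype.card_fin] at hFp
    exact hFp.trans (Nat.mul_le_mul_right _
      (Nat.choose_le_choose _ ((hcard q B hB).trans (hkK q))))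
  · simpa using choose_mul_card_le_of_not_star hA₁ (fun A hA => (hcard p A hA).trans (hkK p))
      hstar (hcard j) (hcross j p hj) (hkt j) (hkK j) (by simpa using hn)
end

section
/- Let $a, b$ be relatively prime positive integers. Then there exists a finite collection $\{(A_i, B_i) : i \in I\}$ of pairs of finite sets with $|A_i| = a$, $|B_i| = b$, $A_i \cap B_i = \emptyset$ for all $i$, such that for all $i \ne j$ it is not the case that $A_i \cap B_j = \emptyset = A_j \cap B_i$, and $|I| \binom{a+b}{a}^{-1} \ge 2 - \frac{1}{a+b}$. -/
/-!
Let `n = a + b` and `N = 2n - 1`. Call an `a`-subset `T` of `{0, …, n - 1}` dominating if every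
proper nonempty prefix `[0, ℓ)` contains more than `ℓa/n` of its points. Since `n` and `a` are
coprime, the cycle lemma says that every `a`-subset of `ℤ/n` has a dominating rotation, so there
are at least `C(n, a)/n` dominating sets.

The system consists of the pairs `(s + T, s + ([0, n) \ T))` in `ℤ/N`, for all shifts `s` and
dominating `T`. If the shifts of two such pairs differ by `0 < d < n` and both cross
intersections are empty, then `T ∩ [d, n)` is `T'` shifted by `d`, so the prefixes `[0, d)` of `T`
and `[0, n - d)` of `T'` carry `a` points together, whereas dominance gives more than
`da/n + (n - d)a/n = a`. As `N < 2n`, one of the two differences of shifts is less than `n`. There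
are `N · C(n, a)/n = (2 - 1/n) C(n, a)` pairs.
-/

open Finset

namespace Nat

lemma count_congr_of_lt {p q : ℕ → Prop} [DecidablePred p] [DecidablePred q] {n : ℕ}
    (h : ∀ k < n, p k ↔ q k) : count p n = count q n :=
  le_antisymm (count_mono_left fun k hk => (h k hk).1) (count_mono_left fun k hk => (h k hk).2)

lemma count_mem_of_subset_range {s : Finset ℕ} {n : ℕ} (hs : s ⊆ range n) :
    count (· ∈ s) n = #s := by
  rw [count_eq_card_filter_range, filter_mem_eq_inter, inter_eq_right.2 hs]

end Nat

def dominatingPatterns (n a : ℕ) : Finset (Finset ℕ) :=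
  {T ∈ (range n).powersetCard a | ∀ ℓ < n, 0 < ℓ → ℓ * a < n * Nat.count (· ∈ T) ℓ}

lemma mem_dominatingPatterns {n a : ℕ} {T : Finset ℕ} :
    T ∈ dominatingPatterns n a ↔
      T ⊆ range n ∧ #T = a ∧
        ∀ ℓ < n, 0 < ℓ → ℓ * a < n * Nat.count (· ∈ T) ℓ := by
  simp [dominatingPatterns, and_assoc]

lemma exists_mem_xor_of_mem_dominatingPatterns {n a d : ℕ} {T T' : Finset ℕ}
    (hT : T ∈ dominatingPatterns n a) (hT' : T' ∈ dominatingPatterns n a)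
    (hd : 0 < d) (hdn : d < n) :
    ∃ x, d ≤ x ∧ x < n ∧ ¬(x ∈ T ↔ x - d ∈ T') := by
  obtain ⟨hTn, hTa, hTdom⟩ := mem_dominatingPatterns.1 hT
  obtain ⟨-, -, hT'dom⟩ := mem_dominatingPatterns.1 hT'
  by_contra! h
  have hsplit : Nat.count (· ∈ T) d + Nat.count (· ∈ T') (n - d) = a := by
    have hcount := Nat.count_add (· ∈ T) d (n - d)
    rw [Nat.add_sub_cancel' hdn.le, Nat.count_mem_of_subset_range hTn, hTa] at hcount
    rw [hcount, Nat.count_congr_of_lt fun k hk => (h (d + k) (by omega) (by omega)).trans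
      (by rw [Nat.add_sub_cancel_left])]
  have hlt : n * a < n * a := calc
    n * a = d * a + (n - d) * a := by rw [← add_mul, Nat.add_sub_cancel' hdn.le]
    _ < n * Nat.count (· ∈ T) d + n * Nat.count (· ∈ T') (n - d) :=
      add_lt_add (hTdom d hdn hd) (hT'dom (n - d) (by omega) (by omega))
    _ = n * a := by rw [← mul_add, hsplit]
  exact lt_irrefl _ hlt

section CycleLemma

variable {n : ℕ} {S : Finset ℕ}

/-- The walk of the cycle lemma along the `n`-periodic extension of `S`, scaled by `n`. -/
def cyclicHeight (n : ℕ) (S : Finset ℕ) (j : ℕ) : ℤ :=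
  n * Nat.count (fun x => x % n ∈ S) j - j * #S

def cyclicRotate (n k : ℕ) (S : Finset ℕ) : Finset ℕ :=
  {y ∈ range n | (k + y) % n ∈ S}

lemma cyclicHeight_add (k ℓ : ℕ) :
    cyclicHeight n S (k + ℓ) =
      cyclicHeight n S k + (n * Nat.count (fun y => (k + y) % n ∈ S) ℓ - ℓ * #S) := by
  simp only [cyclicHeight, Nat.count_add]
  push_cast
  ring

lemma cyclicHeight_periodic (hS : S ⊆ range n) : Function.Periodic (cyclicHeight n S) n := by
  intro j
  have hperiod : Nat.count (fun x => x % n ∈ S) n = #S := by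
    rw [← Nat.count_mem_of_subset_range hS]
    exact Nat.count_congr_of_lt fun k hk => by rw [Nat.mod_eq_of_lt hk]
  rw [add_comm, cyclicHeight_add]
  simp only [Nat.add_mod_left, cyclicHeight, hperiod]
  ring

lemma modEq_of_cyclicHeight_eq (hcop : n.Coprime #S) {j k : ℕ}
    (h : cyclicHeight n S j = cyclicHeight n S k) : j ≡ k [MOD n] := by
  refine Nat.ModEq.cancel_right_of_coprime hcop ?_
  have hnat : j * #S + n * Nat.count (fun x => x % n ∈ S) k =
      k * #S + n * Nat.count (fun x => x % n ∈ S) j := by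
    simp only [cyclicHeight] at h
    zify
    linarith
  unfold Nat.ModEq
  rw [← Nat.add_mul_mod_self_left (j * #S), hnat, Nat.add_mul_mod_self_left]

lemma cyclicRotate_subset_range (k : ℕ) : cyclicRotate n k S ⊆ range n := filter_subset _ _

lemma cyclicRotate_cyclicRotate (hS : S ⊆ range n) {k : ℕ} (hk : k ≤ n) :
    cyclicRotate n (n - k) (cyclicRotate n k S) = S := by
  ext x
  simp only [cyclicRotate, mem_filter, mem_range]
  constructor
  · rintro ⟨hx, -, hmem⟩
    rwa [Nat.add_mod_mod, ← add_assoc, Nat.add_sub_cancel' hk, Nat.add_mod_left,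
      Nat.mod_eq_of_lt hx] at hmem
  · intro hx
    have hxn := mem_range.1 (hS hx)
    refine ⟨hxn, Nat.mod_lt _ (by omega), ?_⟩
    rwa [Nat.add_mod_mod, ← add_assoc, Nat.add_sub_cancel' hk, Nat.add_mod_left,
      Nat.mod_eq_of_lt hxn]

lemma count_cyclicRotate (k : ℕ) {ℓ : ℕ} (hℓ : ℓ ≤ n) :
    (n * Nat.count (· ∈ cyclicRotate n k S) ℓ - ℓ * #S : ℤ) =
      cyclicHeight n S (k + ℓ) - cyclicHeight n S k := by
  rw [cyclicHeight_add, add_sub_cancel_left,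
    Nat.count_congr_of_lt (q := fun y => (k + y) % n ∈ S) fun y hy => by
      simp [cyclicRotate, show y < n by omega]]

theorem exists_cyclicRotate_mem_dominatingPatterns (hn : 0 < n) (hS : S ⊆ range n)
    (hcop : n.Coprime #S) : ∃ k < n, cyclicRotate n k S ∈ dominatingPatterns n #S := by
  obtain ⟨k, hk, hmin⟩ := exists_min_image (range n) (cyclicHeight n S) ⟨0, mem_range.2 hn⟩
  have hper := cyclicHeight_periodic hS
  refine ⟨k, mem_range.1 hk, mem_dominatingPatterns.2 ⟨cyclicRotate_subset_range k, ?_, ?_⟩⟩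
  · have hfull := count_cyclicRotate (S := S) k (le_refl n)
    rw [hper k, sub_self, Nat.count_mem_of_subset_range (cyclicRotate_subset_range k),
      sub_eq_zero] at hfull
    exact_mod_cast mul_left_cancel₀ (by positivity) hfull
  · intro ℓ hℓn hℓ1
    have hle : cyclicHeight n S k ≤ cyclicHeight n S (k + ℓ) := by
      rw [← hper.map_mod_nat (k + ℓ)]
      exact hmin _ (mem_range.2 (Nat.mod_lt _ hn))
    have hne : cyclicHeight n S (k + ℓ) ≠ cyclicHeight n S k := fun h => by
      have hmod : ℓ ≡ 0 [MOD n] :=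
        Nat.ModEq.add_left_cancel' k (modEq_of_cyclicHeight_eq hcop h)
      have := Nat.eq_zero_of_dvd_of_lt ((Nat.modEq_zero_iff_dvd).1 hmod) hℓn
      omega
    have hcount := count_cyclicRotate (S := S) k hℓn.le
    have hpos : (ℓ * #S : ℤ) < n * Nat.count (· ∈ cyclicRotate n k S) ℓ := by
      linarith [lt_of_le_of_ne hle hne.symm]
    exact_mod_cast hpos

theorem choose_le_mul_card_dominatingPatterns {a : ℕ} (hn : 0 < n) (hcop : n.Coprime a) :
    n.choose a ≤ n * #(dominatingPatterns n a) := calc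
  n.choose a = #((range n).powersetCard a) := by rw [card_powersetCard, card_range]
  _ ≤ #((range n ×ˢ dominatingPatterns n a).image fun p => cyclicRotate n (n - p.1) p.2) := by
    refine card_le_card fun S hS => ?_
    obtain ⟨hSn, rfl⟩ := mem_powersetCard.1 hS
    obtain ⟨k, hk, hT⟩ := exists_cyclicRotate_mem_dominatingPatterns hn hSn hcop
    exact mem_image.2
      ⟨(k, _), mem_product.2 ⟨mem_range.2 hk, hT⟩, cyclicRotate_cyclicRotate hSn hk.le⟩
  _ ≤ #(range n ×ˢ dominatingPatterns n a) := card_image_le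
  _ = n * #(dominatingPatterns n a) := by rw [card_product, card_range]

end CycleLemma

section CyclicShift

variable {N : ℕ}

def cyclicShift (s : ZMod N) (X : Finset ℕ) : Finset (ZMod N) :=
  X.image fun x : ℕ => (x : ZMod N) + s

lemma injOn_natCast_add (s : ZMod N) :
    Set.InjOn (fun x : ℕ => (x : ZMod N) + s) (range N) := fun x hx y hy h =>
  ((ZMod.natCast_eq_natCast_iff x y N).1 (add_right_cancel h)).eq_of_lt_of_lt
    (mem_range.1 hx) (mem_range.1 hy)

lemma card_cyclicShift (s : ZMod N) {X : Finset ℕ} (hX : X ⊆ range N) :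
    #(cyclicShift s X) = #X :=
  card_image_of_injOn ((injOn_natCast_add s).mono (coe_subset.2 hX))

lemma disjoint_cyclicShift (s : ZMod N) {X Y : Finset ℕ} (hX : X ⊆ range N) (hY : Y ⊆ range N)
    (h : Disjoint X Y) : Disjoint (cyclicShift s X) (cyclicShift s Y) := by
  refine disjoint_left.2 fun z hzX hzY => ?_
  obtain ⟨x, hx, rfl⟩ := mem_image.1 hzX
  obtain ⟨y, hy, hxy⟩ := mem_image.1 hzY
  rw [injOn_natCast_add s (hY hy) (hX hx) hxy] at hy
  exact disjoint_left.1 h hx hy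

lemma not_disjoint_cyclicShift_of_mem_xor {n d x : ℕ} {s : ZMod N} {T T' : Finset ℕ}
    (hdx : d ≤ x) (hxn : x < n) (hx : ¬(x ∈ T ↔ x - d ∈ T')) :
    ¬(Disjoint (cyclicShift s T) (cyclicShift (s + (d : ZMod N)) (range n \ T')) ∧
      Disjoint (cyclicShift (s + (d : ZMod N)) T') (cyclicShift s (range n \ T))) := by
  have hshift (X : Finset ℕ) (h : x - d ∈ X) :
      (x : ZMod N) + s ∈ cyclicShift (s + (d : ZMod N)) X :=
    mem_image.2 ⟨x - d, h, by push_cast [Nat.cast_sub hdx]; ring⟩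
  have hself (X : Finset ℕ) (h : x ∈ X) : (x : ZMod N) + s ∈ cyclicShift s X :=
    mem_image_of_mem _ h
  rintro ⟨h₁, h₂⟩
  by_cases hxT : x ∈ T
  · have hxT' : x - d ∉ T' := by tauto
    exact disjoint_left.1 h₁ (hself T hxT)
      (hshift _ (mem_sdiff.2 ⟨mem_range.2 (by omega : x - d < n), hxT'⟩))
  · have hxT' : x - d ∈ T' := by tauto
    exact disjoint_left.1 h₂ (hshift T' hxT') (hself _ (mem_sdiff.2 ⟨mem_range.2 hxn, hxT⟩))

variable [NeZero N] {n a : ℕ} {s s' : ZMod N} {T T' : Finset ℕ}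

lemma not_disjoint_cyclicShift_of_val_sub_lt (hT : T ∈ dominatingPatterns n a)
    (hT' : T' ∈ dominatingPatterns n a) (hne : (s, T) ≠ (s', T')) (hlt : (s' - s).val < n) :
    ¬(Disjoint (cyclicShift s T) (cyclicShift s' (range n \ T')) ∧
      Disjoint (cyclicShift s' T') (cyclicShift s (range n \ T))) := by
  set d := (s' - s).val with hd
  have hs' : s' = s + (d : ZMod N) := by rw [hd, ZMod.natCast_zmod_val]; ring
  obtain ⟨x, hdx, hxn, hx⟩ : ∃ x, d ≤ x ∧ x < n ∧ ¬(x ∈ T ↔ x - d ∈ T') := by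
    rcases Nat.eq_zero_or_pos d with h0 | h0
    · obtain ⟨x, hx⟩ : ∃ x, ¬(x ∈ T ↔ x ∈ T') := by
        by_contra! h
        exact hne (by rw [hs', h0, Nat.cast_zero, add_zero, ext h])
      have hxn : x < n := by
        by_cases hxT : x ∈ T
        · exact mem_range.1 ((mem_dominatingPatterns.1 hT).1 hxT)
        · exact mem_range.1 ((mem_dominatingPatterns.1 hT').1 (by tauto))
      exact ⟨x, by omega, hxn, by rwa [h0, Nat.sub_zero]⟩
    · exact exists_mem_xor_of_mem_dominatingPatterns hT hT' h0 hlt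
  rw [hs']
  exact not_disjoint_cyclicShift_of_mem_xor hdx hxn hx

theorem not_disjoint_cyclicShift_of_ne (hN : N < 2 * n) (hT : T ∈ dominatingPatterns n a)
    (hT' : T' ∈ dominatingPatterns n a) (hne : (s, T) ≠ (s', T')) :
    ¬(Disjoint (cyclicShift s T) (cyclicShift s' (range n \ T')) ∧
      Disjoint (cyclicShift s' T') (cyclicShift s (range n \ T))) := by
  rcases lt_or_ge (s' - s).val n with hlt | hge
  · exact not_disjoint_cyclicShift_of_val_sub_lt hT hT' hne hlt
  · have hlt : (s - s').val < n := by
      have hneg := ZMod.neg_val (s' - s)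
      have hval := ZMod.val_lt (s' - s)
      rw [neg_sub] at hneg
      split_ifs at hneg with h0
      · omega
      · omega
    rw [and_comm]
    exact not_disjoint_cyclicShift_of_val_sub_lt hT' hT hne.symm hlt

end CyclicShift

lemma two_sub_inv_le_of_choose_le {n C D : ℕ} (hn : 0 < n) (hC : 0 < C) (h : C ≤ n * D) :
    2 - 1 / (n : ℝ) ≤ ((2 * n - 1) * D : ℕ) * (C : ℝ)⁻¹ := by
  have hn' : (1 : ℝ) ≤ n := by exact_mod_cast hn
  have hC' : (0 : ℝ) < C := by exact_mod_cast hC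
  have hinv : 1 / (n : ℝ) ≤ D / C := by
    rw [div_le_div_iff₀ (by positivity) hC', one_mul, mul_comm]
    exact_mod_cast h
  calc 2 - 1 / (n : ℝ) = (2 * n - 1) * (1 / n) := by field_simp
    _ ≤ (2 * n - 1) * (D / C) := by gcongr; linarith
    _ = ((2 * n - 1) * D : ℕ) * (C : ℝ)⁻¹ := by
      rw [Nat.cast_mul, Nat.cast_sub (by omega)]
      push_cast
      ring

theorem stmt_17_general (a b : ℕ) (hab : Nat.Coprime a b) :
    ∃ (m : ℕ) (A B : Fin m → Finset ℕ),
      (∀ i, (A i).card = a) ∧ (∀ i, (B i).card = b) ∧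
      (∀ i, A i ∩ B i = ∅) ∧
      (∀ i j, i ≠ j → ¬(A i ∩ B j = ∅ ∧ A j ∩ B i = ∅)) ∧
      2 - 1 / ((a : ℝ) + b) ≤ (m : ℝ) * (((a + b).choose a : ℕ) : ℝ)⁻¹ := by
  have hn : 0 < a + b := by
    rcases Nat.eq_zero_or_pos a with rfl | ha
    · rw [Nat.coprime_zero_left] at hab
      omega
    · omega
  have hcop : (a + b).Coprime a := Nat.coprime_self_add_left.2 hab.symm
  set N := 2 * (a + b) - 1 with hN
  have : NeZero N := ⟨by omega⟩
  set I := (univ : Finset (ZMod N)) ×ˢ dominatingPatterns (a + b) a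
  set p : Fin #I → ZMod N × Finset ℕ := fun i => I.equivFin.symm i
  have hT (i : Fin #I) : (p i).2 ∈ dominatingPatterns (a + b) a :=
    (mem_product.1 (I.equivFin.symm i).2).2
  have hp (i : Fin #I) := mem_dominatingPatterns.1 (hT i)
  have hrange : range (a + b) ⊆ range N := range_subset_range.2 (by omega)
  let v : ZMod N ↪ ℕ := ⟨ZMod.val, ZMod.val_injective N⟩
  refine ⟨#I, fun i => (cyclicShift (p i).1 (p i).2).map v,
    fun i => (cyclicShift (p i).1 (range (a + b) \ (p i).2)).map v,
    fun i => ?_, fun i => ?_, fun i => ?_, fun i j hij => ?_, ?_⟩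
  · rw [card_map, card_cyclicShift _ ((hp i).1.trans hrange), (hp i).2.1]
  · rw [card_map, card_cyclicShift _ (sdiff_subset.trans hrange), card_sdiff_of_subset (hp i).1,
      card_range, (hp i).2.1, Nat.add_sub_cancel_left]
  · rw [← map_inter, map_eq_empty, ← disjoint_iff_inter_eq_empty]
    exact disjoint_cyclicShift _ ((hp i).1.trans hrange) (sdiff_subset.trans hrange)
      disjoint_sdiff
  · simp only [← map_inter, map_eq_empty, ← disjoint_iff_inter_eq_empty]
    exact not_disjoint_cyclicShift_of_ne (by omega) (hT i) (hT j)
      fun h => hij (I.equivFin.symm.injective (Subtype.ext h))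
  · have := two_sub_inv_le_of_choose_le hn (Nat.choose_pos (by omega))
      (choose_le_mul_card_dominatingPatterns hn hcop)
    rw [card_product, card_univ, ZMod.card]
    exact_mod_cast this

theorem stmt_17 (a b : ℕ) (ha : 0 < a) (hb : 0 < b) (hab : Nat.Coprime a b) :
    ∃ (m : ℕ) (A B : Fin m → Finset ℕ),
      (∀ i, (A i).card = a) ∧ (∀ i, (B i).card = b) ∧
      (∀ i, A i ∩ B i = ∅) ∧
      (∀ i j, i ≠ j → ¬(A i ∩ B j = ∅ ∧ A j ∩ B i = ∅)) ∧
      2 - 1 / ((a : ℝ) + b) ≤ (m : ℝ) * (((a + b).choose a : ℕ) : ℝ)⁻¹ :=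
  stmt_17_general a b hab
end

section
/- Let $\sigma = (x_1, \dots, x_n)$ be a permutation of $[n]$ that properly separates both pairs $(A_i, B_i)$ and $(A_j, B_j)$ of subsets of $[n]$, where $|A_i \cap B_i| \le t$, $|A_j \cap B_j| \le t$, $|A_i \cap B_j| \ge t$, $|A_j \cap B_i| \ge t$ for some $t \ge 1$. Then $A_i \cap B_j = A_i \cap B_i = A_j \cap B_i = A_j \cap B_j$ and all have size exactly $t$. -/
open Finset

namespace ProperlySeparates

variable {n : ℕ} {σ : Equiv.Perm (Fin n)} {A B Ai Bi Aj Bj : Finset (Fin n)} {x y : Fin n}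

lemma symm_lt_of_mem_sdiff_left (h : ProperlySeparates σ A B) (hx : x ∈ A \ B) (hy : y ∈ B) :
    σ.symm x < σ.symm y :=
  h.1 _ _ (by simpa using hx) (by simpa using hy)

lemma symm_lt_of_mem_sdiff_right (h : ProperlySeparates σ A B) (hx : x ∈ A) (hy : y ∈ B \ A) :
    σ.symm x < σ.symm y :=
  h.2 _ _ (by simpa using hx) (by simpa using hy)

lemma inter_subset_or_inter_subset (hsi : ProperlySeparates σ Ai Bi)
    (hsj : ProperlySeparates σ Aj Bj) : Ai ∩ Bj ⊆ Bi ∨ Aj ∩ Bi ⊆ Bj := by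
  by_contra! h
  obtain ⟨⟨x, hx, hxBi⟩, ⟨y, hy, hyBj⟩⟩ := And.intro (not_subset.1 h.1) (not_subset.1 h.2)
  rw [mem_inter] at hx hy
  exact lt_asymm (hsi.symm_lt_of_mem_sdiff_left (mem_sdiff.2 ⟨hx.1, hxBi⟩) hy.2)
    (hsj.symm_lt_of_mem_sdiff_left (mem_sdiff.2 ⟨hy.1, hyBj⟩) hx.2)

lemma sdiff_subset_of_nonempty (hsi : ProperlySeparates σ Ai Bi)
    (hsj : ProperlySeparates σ Aj Bj) (hne : (Ai ∩ Bj).Nonempty) : (Aj ∩ Bi) \ Bj ⊆ Ai := by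
  obtain ⟨x, hx⟩ := hne
  intro y hy
  rw [mem_sdiff, mem_inter] at hy
  rw [mem_inter] at hx
  by_contra hyAi
  exact lt_asymm (hsi.symm_lt_of_mem_sdiff_right hx.1 (mem_sdiff.2 ⟨hy.1.2, hyAi⟩))
    (hsj.symm_lt_of_mem_sdiff_left (mem_sdiff.2 ⟨hy.1.1, hy.2⟩) hx.2)

lemma inter_eq_of_inter_subset {t : ℕ} (ht : 1 ≤ t) (hsi : ProperlySeparates σ Ai Bi)
    (hsj : ProperlySeparates σ Aj Bj) (hai : (Ai ∩ Bi).card ≤ t) (haj : (Aj ∩ Bj).card ≤ t)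
    (hbi : t ≤ (Ai ∩ Bj).card) (hbj : t ≤ (Aj ∩ Bi).card) (hX : Ai ∩ Bj ⊆ Bi) :
    Ai ∩ Bj = Ai ∩ Bi ∧ Aj ∩ Bi = Aj ∩ Bj := by
  have hXI : Ai ∩ Bj = Ai ∩ Bi :=
    eq_of_subset_of_card_le (subset_inter inter_subset_left hX) (hai.trans hbi)
  have hY : Aj ∩ Bi ⊆ Bj := by
    intro y hy
    by_contra hyBj
    have hyAi := sdiff_subset_of_nonempty hsi hsj (card_pos.1 (ht.trans hbi))
      (mem_sdiff.2 ⟨hy, hyBj⟩)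
    have hyI : y ∈ Ai ∩ Bi := mem_inter.2 ⟨hyAi, (mem_inter.1 hy).2⟩
    exact hyBj (mem_inter.1 (hXI ▸ hyI)).2
  exact ⟨hXI, eq_of_subset_of_card_le (subset_inter inter_subset_left hY) (haj.trans hbj)⟩

lemma inter_subset_or_inter_subset_of_subset (hsi : ProperlySeparates σ Ai Bi)
    (hsj : ProperlySeparates σ Aj Bj) (hI : Ai ∩ Bi ⊆ Bj) : Ai ∩ Bi ⊆ Aj ∨ Aj ∩ Bi ⊆ Ai := by
  by_contra! h
  obtain ⟨⟨x, hx, hxAj⟩, ⟨y, hy, hyAi⟩⟩ := And.intro (not_subset.1 h.1) (not_subset.1 h.2)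
  have hxBj := hI hx
  rw [mem_inter] at hx hy
  exact lt_asymm (hsi.symm_lt_of_mem_sdiff_right hx.1 (mem_sdiff.2 ⟨hy.2, hyAi⟩))
    (hsj.symm_lt_of_mem_sdiff_right hy.1 (mem_sdiff.2 ⟨hxBj, hxAj⟩))

end ProperlySeparates

open ProperlySeparates in
theorem stmt_18 (n t : ℕ) (ht : 1 ≤ t) (σ : Equiv.Perm (Fin n))
    (Ai Bi Aj Bj : Finset (Fin n))
    (hsi : ProperlySeparates σ Ai Bi) (hsj : ProperlySeparates σ Aj Bj)
    (hai : (Ai ∩ Bi).card ≤ t) (haj : (Aj ∩ Bj).card ≤ t)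
    (hbi : t ≤ (Ai ∩ Bj).card) (hbj : t ≤ (Aj ∩ Bi).card) :
    Ai ∩ Bj = Ai ∩ Bi ∧ Ai ∩ Bi = Aj ∩ Bi ∧ Aj ∩ Bi = Aj ∩ Bj ∧
      (Ai ∩ Bi).card = t := by
  obtain ⟨hX, hY⟩ : Ai ∩ Bj = Ai ∩ Bi ∧ Aj ∩ Bi = Aj ∩ Bj := by
    rcases inter_subset_or_inter_subset hsi hsj with h | h
    · exact inter_eq_of_inter_subset ht hsi hsj hai haj hbi hbj h
    · exact (inter_eq_of_inter_subset ht hsj hsi haj hai hbj hbi h).symm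
  have hIcard : (Ai ∩ Bi).card = t := le_antisymm hai (hX ▸ hbi)
  have hYcard : (Aj ∩ Bi).card = t := le_antisymm (hY ▸ haj) hbj
  refine ⟨hX, ?_, hY, hIcard⟩
  rcases inter_subset_or_inter_subset_of_subset hsi hsj (hX ▸ inter_subset_right) with h | h
  · exact eq_of_subset_of_card_le (subset_inter h inter_subset_right) (by omega)
  · exact (eq_of_subset_of_card_le (subset_inter h inter_subset_right) (by omega)).symm
end

section
/- Let $t \ge 1$, $t \le k \le n$, $n \ge (k-t+1)(t+1)$, and let $\mathcal{F} \subseteq \binom{[n]}{\le k}$ be an up-set such that for any $A, B \in \mathcal{F}$ with $|A \cap B| < t$, $|A \triangle B| \le k - t$. Then $\mathcal{F}$ is $t$-intersecting, i.e., $|A \cap B| \ge t$ for all $A, B \in \mathcal{F}$. -/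
/-- `F` is an up-set within the family of subsets of `[n]` of size at most `k`. -/
def IsUpSet {n : ℕ} (k : ℕ) (F : Finset (Finset (Fin n))) : Prop :=
  ∀ A ∈ F, A.card < k → ∀ i ∉ A, insert i A ∈ F

theorem stmt_19 (n k t : ℕ) (ht : 1 ≤ t) (htk : t ≤ k) (hkn : k ≤ n)
    (hn : (k - t + 1) * (t + 1) ≤ n)
    (F : Finset (Finset (Fin n)))
    (hrank : ∀ A ∈ F, A.card ≤ k)
    (hup : IsUpSet k F)
    (hcond : ∀ A ∈ F, ∀ B ∈ F, (A ∩ B).card < t → ((A \ B) ∪ (B \ A)).card ≤ k - t) :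
    ∀ A ∈ F, ∀ B ∈ F, t ≤ (A ∩ B).card := by
  have key : ∀ d : ℕ, ∀ A ∈ F, ∀ B ∈ F, (A ∩ B).card < t →
      k - t + 1 ≤ ((A \ B) ∪ (B \ A)).card + d → False := by
    intro d
    induction d with
    | zero =>
      intro A hA B hB hint hcard
      have := hcond A hA B hB hint
      omega
    | succ d ih =>
      intro A hA B hB hint hcard
      have hsd := hcond A hA B hB hint
      have hsub : A ∪ B ⊆ (A ∩ B) ∪ ((A \ B) ∪ (B \ A)) := by
        intro x hx
        simp only [Finset.mem_union, Finset.mem_inter, Finset.mem_sdiff] at hx ⊢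
        tauto
      have hcu : (A ∪ B).card ≤ (A ∩ B).card + ((A \ B) ∪ (B \ A)).card :=
        le_trans (Finset.card_le_card hsub) (Finset.card_union_le _ _)
      have hlt : (A ∪ B).card < n := by omega
      have hex : ∃ i, i ∉ A ∪ B := by
        by_contra h
        push_neg at h
        have : A ∪ B = Finset.univ := Finset.eq_univ_of_forall h
        rw [this, Finset.card_univ, Fintype.card_fin] at hlt
        omega
      obtain ⟨i, hi⟩ := hex
      simp only [Finset.mem_union, not_or] at hi
      obtain ⟨hiA, hiB⟩ := hi
      have hAcard : A.card < k := by
        have : A.card ≤ (A ∪ B).card := Finset.card_le_card Finset.subset_union_left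
        omega
      have hA' : insert i A ∈ F := hup A hA hAcard i hiA
      have h1 : insert i A \ B = insert i (A \ B) := by
        ext x
        simp only [Finset.mem_insert, Finset.mem_sdiff]
        constructor
        · rintro ⟨h | h, hB'⟩
          · exact Or.inl h
          · exact Or.inr ⟨h, hB'⟩
        · rintro (h | ⟨h, hB'⟩)
          · exact ⟨Or.inl h, h ▸ hiB⟩
          · exact ⟨Or.inr h, hB'⟩
      have h2 : B \ insert i A = B \ A := by
        ext x
        simp only [Finset.mem_sdiff, Finset.mem_insert, not_or]
        constructor
        · rintro ⟨hx, _, hx2⟩; exact ⟨hx, hx2⟩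
        · rintro ⟨hx, hx2⟩
          exact ⟨hx, fun h => hiB (h ▸ hx), hx2⟩
      have hnotmem : i ∉ (A \ B) ∪ (B \ A) := by
        simp only [Finset.mem_union, Finset.mem_sdiff, not_or]
        tauto
      have hcard' : ((insert i A \ B) ∪ (B \ insert i A)).card
          = ((A \ B) ∪ (B \ A)).card + 1 := by
        rw [h1, h2, Finset.insert_union, Finset.card_insert_of_notMem hnotmem]
      apply ih (insert i A) hA' B hB
      · rwa [Finset.insert_inter_of_notMem hiB]
      · omega
  intro A hA B hB
  by_contra h
  push_neg at h
  exact key (k - t + 1) A hA B hB h (by omega)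
end
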